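/- arXiv:2503.18921 — 10 statements merged into one kernel-verified Lean document; each statement's English description precedes it below -/
import Mathlib

section
/- Let d ≥ 1 and let T_1, …, T_{d+1} be order-d real tensors of common shape with T_1 = T and T_1, …, T_d all nonzero. Fix a reference multilinear rank r = (r_1,…,r_d) and set the relative errors ε̂_i = min{ ‖T_i − S‖ : S of Tucker rank at most r } / ‖T_i‖. Let Φ_1,…,Φ_d : [0,∞) → [0,∞) be nondecreasing, and assume for every i = 1,…,d that (a) ⟨T_i − T_{i+1}, T_{i+1}⟩ = 0 with respect to the Frobenius inner product (as holds when T_{i+1} is a Frobenius-optimal least-squares reconstruction of T_i from selected mode-i fibers), and (b) ‖T_i − T_{i+1}‖/‖T_i‖ ≤ Φ_i(ε̂_i). Then ε̂_{i+1} ≤ ε̂_i + Φ_i(ε̂_i) for every i = 1,…,d−1, and consequently ‖T_d − T_{d+1}‖/‖T_d‖ ≤ Φ_d( (I+Φ_{d−1}) ∘ ⋯ ∘ (I+Φ_1)(ε̂_1) ), where I denotes the identity map on [0,∞). -/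
noncomputable section

/-- An order-`d` real tensor of shape `n 0 × ⋯ × n (d-1)`, as a map on multi-indices. -/
abbrev Tensor {d : ℕ} (n : Fin d → ℕ) : Type := ((j : Fin d) → Fin (n j)) → ℝ

/-- Frobenius norm of a tensor: the ℓ² norm of its entries. -/
def tnorm {d : ℕ} {n : Fin d → ℕ} (T : Tensor n) : ℝ := Real.sqrt (∑ i, T i ^ 2)

/-- Mode-`j` matricization: rows indexed by mode `j`, columns by the remaining multi-index. -/
def matricize {d : ℕ} {n : Fin d → ℕ} (T : Tensor n) (j : Fin d) :
    Matrix (Fin (n j)) ((i : {i : Fin d // i ≠ j}) → Fin (n i.1)) ℝ :=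
  Matrix.of fun a b => T fun i => if h : i = j then cast (by rw [h]) a else b ⟨i, h⟩

/-- `T` has Tucker (multilinear) rank at most `r`. -/
def TuckerRankLE {d : ℕ} {n : Fin d → ℕ} (T : Tensor n) (r : Fin d → ℕ) : Prop :=
  ∀ j, (matricize T j).rank ≤ r j

/-- Best Tucker rank-`r` approximation error of `T` in Frobenius norm. -/
def tuckerErr {d : ℕ} {n : Fin d → ℕ} (T : Tensor n) (r : Fin d → ℕ) : ℝ :=
  sInf {t : ℝ | ∃ S : Tensor n, TuckerRankLE S r ∧ t = tnorm (T - S)}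


/-- `iterComp Φ j = (I + Φ (j-1)) ∘ ⋯ ∘ (I + Φ 0)` (0-based indexing). -/
def iterComp (Φ : ℕ → ℝ → ℝ) : ℕ → ℝ → ℝ
  | 0 => fun x => x
  | (j + 1) => fun x => iterComp Φ j x + Φ j (iterComp Φ j x)

open scoped RealInnerProductSpace

namespace Stmt2Aux

variable {d : ℕ} {n : Fin d → ℕ}

/-- Reinterpret a tensor as a Euclidean-space vector. -/
def toE {d : ℕ} (n : Fin d → ℕ) :
    Tensor n ≃ₗ[ℝ] EuclideanSpace ℝ ((j : Fin d) → Fin (n j)) :=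
  (WithLp.linearEquiv 2 ℝ _).symm

lemma toE_apply (T : Tensor n) (i : (j : Fin d) → Fin (n j)) : toE n T i = T i := rfl

lemma tnorm_eq (T : Tensor n) : tnorm T = ‖toE n T‖ := by
  rw [EuclideanSpace.norm_eq, tnorm]
  congr 1
  refine Finset.sum_congr rfl fun i _ => ?_
  rw [toE_apply, Real.norm_eq_abs, sq_abs]

lemma inner_toE (X Y : Tensor n) : ⟪toE n X, toE n Y⟫ = ∑ i, X i * Y i := by
  simp [PiLp.inner_apply, RCLike.inner_apply, toE_apply]
  exact Finset.sum_congr rfl fun i _ => mul_comm _ _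

lemma tnorm_nonneg (T : Tensor n) : 0 ≤ tnorm T := Real.sqrt_nonneg _

lemma tnorm_pos {T : Tensor n} (h : T ≠ 0) : 0 < tnorm T := by
  rw [tnorm_eq]
  exact norm_pos_iff.mpr fun h0 => h ((LinearEquiv.map_eq_zero_iff (toE n)).mp h0)

lemma tnorm_add_le (X Y : Tensor n) : tnorm (X + Y) ≤ tnorm X + tnorm Y := by
  rw [tnorm_eq, tnorm_eq, tnorm_eq, map_add]
  exact norm_add_le _ _

lemma tnorm_smul (c : ℝ) (X : Tensor n) : tnorm (c • X) = |c| * tnorm X := by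
  rw [tnorm_eq, map_smul, norm_smul, Real.norm_eq_abs, tnorm_eq]

lemma matricize_zero (j : Fin d) : matricize (0 : Tensor n) j = 0 := rfl

lemma matricize_smul (c : ℝ) (S : Tensor n) (j : Fin d) :
    matricize (c • S) j = c • matricize S j := rfl

lemma tuckerRankLE_zero (r : Fin d → ℕ) : TuckerRankLE (0 : Tensor n) r := fun j => by
  rw [matricize_zero, Matrix.rank_zero]
  exact Nat.zero_le _

lemma rank_smul_le {m o : Type*} [Fintype m] [Fintype o] (c : ℝ) (M : Matrix m o ℝ) :
    (c • M).rank ≤ M.rank := by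
  unfold Matrix.rank
  apply Submodule.finrank_mono
  rintro x ⟨v, rfl⟩
  refine ⟨c • v, ?_⟩
  show M.mulVec (c • v) = (c • M).mulVec v
  rw [Matrix.mulVec_smul, Matrix.smul_mulVec]

lemma tuckerRankLE_smul {S : Tensor n} {r : Fin d → ℕ} (h : TuckerRankLE S r) (c : ℝ) :
    TuckerRankLE (c • S) r := fun j => by
  rw [matricize_smul]
  exact (rank_smul_le c _).trans (h j)

lemma errSet_nonempty (T : Tensor n) (r : Fin d → ℕ) :
    {t : ℝ | ∃ S : Tensor n, TuckerRankLE S r ∧ t = tnorm (T - S)}.Nonempty :=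
  ⟨tnorm (T - 0), 0, tuckerRankLE_zero r, rfl⟩

lemma errSet_bdd (T : Tensor n) (r : Fin d → ℕ) :
    BddBelow {t : ℝ | ∃ S : Tensor n, TuckerRankLE S r ∧ t = tnorm (T - S)} :=
  ⟨0, fun t ⟨_, _, ht⟩ => ht ▸ tnorm_nonneg _⟩

lemma tuckerErr_nonneg (T : Tensor n) (r : Fin d → ℕ) : 0 ≤ tuckerErr T r :=
  le_csInf (errSet_nonempty T r) fun t ⟨_, _, ht⟩ => ht ▸ tnorm_nonneg _

lemma tuckerErr_le (T : Tensor n) {S : Tensor n} {r : Fin d → ℕ} (hS : TuckerRankLE S r) :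
    tuckerErr T r ≤ tnorm (T - S) :=
  csInf_le (errSet_bdd T r) ⟨S, hS, rfl⟩

lemma key (r : Fin d → ℕ) {A B : Tensor n} (hA : A ≠ 0) (hB : B ≠ 0)
    (horth : ∑ idx, (A idx - B idx) * B idx = 0) :
    tuckerErr B r / tnorm B ≤ tuckerErr A r / tnorm A + tnorm (A - B) / tnorm A := by
  have hna : 0 < tnorm A := tnorm_pos hA
  have hnb : 0 < tnorm B := tnorm_pos hB
  set na := tnorm A with hna_def
  set nb := tnorm B with hnb_def
  have hinner : ⟪toE n A, toE n B⟫ = nb ^ 2 := by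
    have h1 : ⟪toE n (A - B), toE n B⟫ = 0 := by
      rw [inner_toE]; simpa using horth
    rw [map_sub, inner_sub_left] at h1
    have h2 : ⟪toE n B, toE n B⟫ = nb ^ 2 := by
      rw [real_inner_self_eq_norm_sq, hnb_def, tnorm_eq]
    linarith
  have hpyth : na ^ 2 = tnorm (A - B) ^ 2 + nb ^ 2 := by
    have h3 : tnorm (A - B) ^ 2 = na ^ 2 - 2 * nb ^ 2 + nb ^ 2 := by
      rw [tnorm_eq, map_sub, norm_sub_sq_real, hinner, ← tnorm_eq, ← tnorm_eq,
        ← hna_def, ← hnb_def]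
    linarith
  have hble : nb ≤ na := by nlinarith [sq_nonneg (tnorm (A - B))]
  set c := nb ^ 2 / na ^ 2 with hc
  have hc0 : 0 ≤ c := by positivity
  have hcpos : 0 < c := by positivity
  have hBcA : tnorm (B - c • A) = (nb / na) * tnorm (A - B) := by
    have e1 : ⟪toE n B, toE n (c • A)⟫ = c * nb ^ 2 := by
      rw [map_smul, inner_smul_right, real_inner_comm, hinner]
    have e2 : ‖toE n (c • A)‖ = c * na := by
      rw [← tnorm_eq, tnorm_smul, abs_of_nonneg hc0, hna_def]
    have hsq : tnorm (B - c • A) ^ 2 = nb ^ 2 - 2 * c * nb ^ 2 + c ^ 2 * na ^ 2 := by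
      rw [tnorm_eq, map_sub, norm_sub_sq_real, e1, e2, ← tnorm_eq, ← hnb_def]
      ring
    have hAB2 : tnorm (A - B) ^ 2 = na ^ 2 - nb ^ 2 := by linarith
    have hrhs : ((nb / na) * tnorm (A - B)) ^ 2 = nb ^ 2 - 2 * c * nb ^ 2 + c ^ 2 * na ^ 2 := by
      rw [mul_pow, hAB2, hc]
      field_simp
      ring
    calc tnorm (B - c • A) = Real.sqrt (tnorm (B - c • A) ^ 2) :=
          (Real.sqrt_sq (tnorm_nonneg _)).symm
      _ = Real.sqrt (((nb / na) * tnorm (A - B)) ^ 2) := by rw [hsq, hrhs]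
      _ = (nb / na) * tnorm (A - B) := Real.sqrt_sq (mul_nonneg (by positivity) (tnorm_nonneg _))
  have main : tuckerErr B r ≤ (nb / na) * tnorm (A - B) + c * tuckerErr A r := by
    refine le_of_forall_pos_le_add fun δ hδ => ?_
    obtain ⟨t, ⟨S, hS, rfl⟩, hlt⟩ :=
      Real.lt_sInf_add_pos (errSet_nonempty A r) (div_pos hδ hcpos)
    have h1 : tuckerErr B r ≤ tnorm (B - c • S) := tuckerErr_le B (tuckerRankLE_smul hS c)
    have hsplit : B - c • S = (B - c • A) + c • (A - S) := by
      ext idx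
      simp [Pi.smul_apply, smul_eq_mul]
      ring
    have h2 : tnorm (B - c • S) ≤ tnorm (B - c • A) + tnorm (c • (A - S)) := by
      rw [hsplit]; exact tnorm_add_le _ _
    have h3 : tnorm (c • (A - S)) = c * tnorm (A - S) := by
      rw [tnorm_smul, abs_of_nonneg hc0]
    have h4 : c * tnorm (A - S) ≤ c * (tuckerErr A r + δ / c) :=
      mul_le_mul_of_nonneg_left hlt.le hc0
    have h5 : c * (tuckerErr A r + δ / c) = c * tuckerErr A r + δ := by
      field_simp
    linarith [h1, h2, hBcA]
  -- conclude
  have hq : nb / na ≤ 1 := (div_le_one hna).mpr hble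
  have hq0 : 0 ≤ nb / na := div_nonneg hnb.le hna.le
  have hc_eq : c = (nb / na) * (nb / na) := by rw [hc, pow_two, pow_two, div_mul_div_comm]
  have final : tuckerErr B r ≤ (nb / na) * (tuckerErr A r + tnorm (A - B)) := by
    nlinarith [main, tuckerErr_nonneg A r, mul_nonneg hq0 (tuckerErr_nonneg A r)]
  rw [← add_div, div_le_div_iff₀ hnb hna]
  have h2 : (nb / na) * (tuckerErr A r + tnorm (A - B)) * na
      = (tuckerErr A r + tnorm (A - B)) * nb := by
    field_simp
  linarith [mul_le_mul_of_nonneg_right final hna.le, h2]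

end Stmt2Aux

open Stmt2Aux in
/-- Relative-error version of the adaptive sequential CoreID error bound, under the
orthogonality hypothesis `⟨T_i − T_{i+1}, T_{i+1}⟩ = 0`.  (0-based indexing:
`T 0, …, T d` are the tensors `T_1, …, T_{d+1}`, `T 0 = T` the input tensor,
and `Φ 0, …, Φ (d-1)` are `Φ_1, …, Φ_d`.) -/
theorem stmt2 {d : ℕ} (hd : 1 ≤ d) {n : Fin d → ℕ} (r : Fin d → ℕ)
    (T : ℕ → Tensor n)
    (hT0 : ∀ i < d, T i ≠ 0)
    (Φ : ℕ → ℝ → ℝ)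
    (hmono : ∀ i < d, MonotoneOn (Φ i) (Set.Ici 0))
    (hnn : ∀ i < d, ∀ x : ℝ, 0 ≤ x → 0 ≤ Φ i x)
    (horth : ∀ i < d, ∑ idx, (T i idx - T (i + 1) idx) * T (i + 1) idx = 0)
    (hstep : ∀ i < d,
      tnorm (T i - T (i + 1)) / tnorm (T i) ≤ Φ i (tuckerErr (T i) r / tnorm (T i))) :
    (∀ i, i + 1 < d →
        tuckerErr (T (i + 1)) r / tnorm (T (i + 1)) ≤
          tuckerErr (T i) r / tnorm (T i) + Φ i (tuckerErr (T i) r / tnorm (T i))) ∧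
      tnorm (T (d - 1) - T d) / tnorm (T (d - 1)) ≤
        Φ (d - 1) (iterComp Φ (d - 1) (tuckerErr (T 0) r / tnorm (T 0))) := by
  have eps_nonneg : ∀ i, 0 ≤ tuckerErr (T i) r / tnorm (T i) := fun i =>
    div_nonneg (tuckerErr_nonneg _ _) (tnorm_nonneg _)
  have part1 : ∀ i, i + 1 < d →
      tuckerErr (T (i + 1)) r / tnorm (T (i + 1)) ≤
        tuckerErr (T i) r / tnorm (T i) + Φ i (tuckerErr (T i) r / tnorm (T i)) := by
    intro i hi
    have hid : i < d := Nat.lt_of_succ_lt hi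
    have h1 := key r (hT0 i hid) (hT0 (i + 1) hi) (horth i hid)
    exact h1.trans (add_le_add_right (hstep i hid) _)
  refine ⟨part1, ?_⟩
  have hiter : ∀ j, j < d →
      tuckerErr (T j) r / tnorm (T j) ≤ iterComp Φ j (tuckerErr (T 0) r / tnorm (T 0)) ∧
        0 ≤ iterComp Φ j (tuckerErr (T 0) r / tnorm (T 0)) := by
    intro j
    induction j with
    | zero => intro _; exact ⟨le_refl _, eps_nonneg 0⟩
    | succ j ih =>
      intro hj
      have hjd : j < d := Nat.lt_of_succ_lt hj
      obtain ⟨h1, h2⟩ := ih hjd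
      have hm : Φ j (tuckerErr (T j) r / tnorm (T j)) ≤
          Φ j (iterComp Φ j (tuckerErr (T 0) r / tnorm (T 0))) :=
        hmono j hjd (Set.mem_Ici.mpr (eps_nonneg j)) (Set.mem_Ici.mpr h2) h1
      refine ⟨(part1 j hj).trans ?_, add_nonneg h2 (hnn j hjd _ h2)⟩
      exact add_le_add h1 hm
  have hd1 : d - 1 < d := Nat.sub_lt hd one_pos
  obtain ⟨h1, h2⟩ := hiter (d - 1) hd1
  have hdd : d - 1 + 1 = d := Nat.succ_pred_eq_of_pos hd
  have hs := hstep (d - 1) hd1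
  rw [hdd] at hs
  exact hs.trans
    (hmono (d - 1) hd1 (Set.mem_Ici.mpr (eps_nonneg (d - 1))) (Set.mem_Ici.mpr h2) h1)
end
end

section
/- Let A be a real N×n matrix, J a subset of its column indices, δ ∈ [0,1), and let S be a δ-SE of A. Let X* be a minimizer of X ↦ ‖SA_{:,J}X − SA‖ in Frobenius norm, and fix a reference rank r and ε ≥ 0. If min_X ‖SA_{:,J}X − SA‖² ≤ (1+ε)·‖SA − (SA)^{(r)}‖², then ‖A − A_{:,J}X*‖² ≤ (1+ε)·((1+δ)/(1−δ))·‖A − A^{(r)}‖². -/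
noncomputable section

/-- Squared Euclidean norm of a vector. -/
def sqnorm {α : Type*} [Fintype α] (v : α → ℝ) : ℝ := ∑ i, v i ^ 2

/-- Squared Frobenius norm of a matrix. -/
def frobSq {α β : Type*} [Fintype α] [Fintype β] (B : Matrix α β ℝ) : ℝ := ∑ i, ∑ j, B i j ^ 2

/-- `S` is a `δ`-subspace embedding of (the column space of) `A`. -/
def IsSE {m N n : ℕ} (δ : ℝ) (S : Matrix (Fin m) (Fin N) ℝ)
    (A : Matrix (Fin N) (Fin n) ℝ) : Prop :=
  ∀ x ∈ LinearMap.range A.mulVecLin,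
    (1 - δ) * sqnorm x ≤ sqnorm (S.mulVec x) ∧ sqnorm (S.mulVec x) ≤ (1 + δ) * sqnorm x

/-- `‖A - A^{(r)}‖²`: best Frobenius approximation error of `A` by matrices of rank ≤ `r`. -/
def rankErrSq {M n : Type*} [Fintype M] [Fintype n] (A : Matrix M n ℝ) (r : ℕ) : ℝ :=
  sInf {t : ℝ | ∃ B : Matrix M n ℝ, B.rank ≤ r ∧ t = frobSq (A - B)}

/-- The submatrix `A_{:,J}` of the columns of `A` indexed by the finite set `J`. -/
def colsOf {N n : ℕ} (A : Matrix (Fin N) (Fin n) ℝ) (J : Finset (Fin n)) :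
    Matrix (Fin N) ↥J ℝ :=
  A.submatrix id Subtype.val

lemma frobSq_nonneg {α β : Type*} [Fintype α] [Fintype β] (B : Matrix α β ℝ) : 0 ≤ frobSq B := by
  unfold frobSq; positivity

lemma frobSq_cols {α β : Type*} [Fintype α] [Fintype β] (B : Matrix α β ℝ) :
    frobSq B = ∑ j, sqnorm (fun i => B i j) := by
  rw [frobSq, Finset.sum_comm]; rfl

lemma frobSq_neg {α β : Type*} [Fintype α] [Fintype β] (B : Matrix α β ℝ) :
    frobSq (-B) = frobSq B := by simp [frobSq]

lemma col_mul {α β γ : Type*} [Fintype α] [Fintype β] [Fintype γ]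
    (M : Matrix α β ℝ) (B : Matrix β γ ℝ) (j : γ) :
    (fun i => (M * B) i j) = M.mulVec (fun k => B k j) := by
  funext i; simp [Matrix.mul_apply, Matrix.mulVec, dotProduct]

lemma sqnorm_eq_norm_sq {N : ℕ} (v : Fin N → ℝ) :
    sqnorm v = ‖(WithLp.equiv 2 (Fin N → ℝ)).symm v‖ ^ 2 := by
  rw [EuclideanSpace.norm_eq, Real.sq_sqrt (by positivity)]
  simp [sqnorm, Real.norm_eq_abs, sq_abs]

def eE {N : ℕ} : (Fin N → ℝ) ≃ₗ[ℝ] EuclideanSpace ℝ (Fin N) :=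
  (WithLp.linearEquiv 2 ℝ (Fin N → ℝ)).symm

variable {N n : ℕ} (A : Matrix (Fin N) (Fin n) ℝ)

def Ksub : Submodule ℝ (EuclideanSpace ℝ (Fin N)) :=
  LinearMap.range ((eE.toLinearMap).comp A.mulVecLin)

def Pmat : Matrix (Fin N) (Fin N) ℝ :=
  LinearMap.toMatrix' ((eE.symm.toLinearMap).comp
    (((Ksub A).subtype.comp (Submodule.orthogonalProjection (Ksub A)).toLinearMap).comp eE.toLinearMap))

lemma Pmat_mulVec (x : Fin N → ℝ) :
    (Pmat A).mulVec x = eE.symm (Submodule.orthogonalProjection (Ksub A) (eE x)) := by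
  rw [← Matrix.toLin'_apply, Pmat, Matrix.toLin'_toMatrix']; rfl

lemma Pmat_mulVec_mem (x : Fin N → ℝ) :
    (Pmat A).mulVec x ∈ LinearMap.range A.mulVecLin := by
  rw [Pmat_mulVec]
  obtain ⟨v, hv⟩ := (Submodule.orthogonalProjection (Ksub A) (eE x)).2
  exact ⟨v, by rw [← hv]; rfl⟩

lemma Pmat_fix (x : Fin N → ℝ) (hx : x ∈ LinearMap.range A.mulVecLin) :
    (Pmat A).mulVec x = x := by
  rw [Pmat_mulVec]
  have hx' : eE x ∈ Ksub A := by obtain ⟨v, hv⟩ := hx; exact ⟨v, by rw [← hv]; rfl⟩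
  rw [show Submodule.orthogonalProjection (Ksub A) (eE x) = ⟨eE x, hx'⟩ from
    Submodule.orthogonalProjectionOnto_mem_subspace_eq_self ⟨eE x, hx'⟩]; rfl

lemma Pmat_sqnorm_le (x : Fin N → ℝ) :
    sqnorm ((Pmat A).mulVec x) ≤ sqnorm x := by
  rw [Pmat_mulVec]
  have h1 : sqnorm (eE.symm (Submodule.orthogonalProjection (Ksub A) (eE x) : EuclideanSpace ℝ (Fin N)))
      = ‖(Submodule.orthogonalProjection (Ksub A) (eE x) : EuclideanSpace ℝ (Fin N))‖ ^ 2 := by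
    rw [sqnorm_eq_norm_sq]; rfl
  have h2 : sqnorm x = ‖eE (N := N) x‖ ^ 2 := by rw [sqnorm_eq_norm_sq]; rfl
  rw [h1, h2]
  have hle : ‖(Submodule.orthogonalProjection (Ksub A) (eE x) : EuclideanSpace ℝ (Fin N))‖ ≤ ‖eE (N := N) x‖ := by
    calc ‖(Submodule.orthogonalProjection (Ksub A) (eE x) : EuclideanSpace ℝ (Fin N))‖
        = ‖Submodule.orthogonalProjection (Ksub A) (eE x)‖ := rfl
      _ ≤ ‖Submodule.orthogonalProjection (Ksub A)‖ * ‖eE (N := N) x‖ := (Submodule.orthogonalProjection (Ksub A)).le_opNorm _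
      _ ≤ 1 * ‖eE (N := N) x‖ := by gcongr; exact Submodule.orthogonalProjectionOnto_norm_le _
      _ = _ := one_mul _
  exact pow_le_pow_left₀ (norm_nonneg _) hle 2

lemma Pmat_mul_eq (k : ℕ) (B : Matrix (Fin N) (Fin k) ℝ)
    (hB : ∀ j, (fun i => B i j) ∈ LinearMap.range A.mulVecLin) :
    Pmat A * B = B := by
  ext i j
  have := congrFun (Pmat_fix A _ (hB j)) i
  rw [← col_mul] at this
  exact this

lemma colsub_mem (J : Finset (Fin n)) (X : Matrix ↥J (Fin n) ℝ) (j : Fin n) :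
    (fun i => (colsOf A J * X - A) i j) ∈ LinearMap.range A.mulVecLin := by
  refine ⟨(fun i' => (∑ k : ↥J, if (k : Fin n) = i' then X k j else 0)
    - (if i' = j then 1 else 0)), ?_⟩
  funext i
  simp only [Matrix.mulVecLin_apply, Matrix.mulVec, dotProduct, mul_sub,
    Finset.sum_sub_distrib, Finset.mul_sum, mul_ite, mul_zero, mul_one,
    Matrix.sub_apply, Matrix.mul_apply, colsOf, Matrix.submatrix_apply, id]
  rw [Finset.sum_comm]
  simp [Finset.sum_ite_eq, eq_comm]


/-- If `S` is a `δ`-SE of `A`, `X*` minimizes the sketched least-squares problem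
`X ↦ ‖S A_{:,J} X - S A‖`, and the sketched problem has error at most
`(1+ε) ‖SA - (SA)^{(r)}‖²`, then `‖A - A_{:,J} X*‖² ≤ (1+ε) (1+δ)/(1-δ) ‖A - A^{(r)}‖²`. -/
theorem stmt5 {N n m : ℕ} (A : Matrix (Fin N) (Fin n) ℝ) (J : Finset (Fin n))
    (r : ℕ) (δ ε : ℝ) (hδ : δ ∈ Set.Ico (0 : ℝ) 1) (hε : 0 ≤ ε)
    (S : Matrix (Fin m) (Fin N) ℝ) (hSE : IsSE δ S A)
    (Xs : Matrix ↥J (Fin n) ℝ)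
    (hXs : ∀ X : Matrix ↥J (Fin n) ℝ,
      frobSq (S * colsOf A J * Xs - S * A) ≤ frobSq (S * colsOf A J * X - S * A))
    (hmin : sInf {t : ℝ | ∃ X : Matrix ↥J (Fin n) ℝ,
        t = frobSq (S * colsOf A J * X - S * A)} ≤ (1 + ε) * rankErrSq (S * A) r) :
    frobSq (A - colsOf A J * Xs) ≤ (1 + ε) * ((1 + δ) / (1 - δ)) * rankErrSq A r := by
  obtain ⟨hδ0, hδ1⟩ := hδ
  have h1δ : (0:ℝ) < 1 - δ := by linarith
  have h1δ' : (0:ℝ) < 1 + δ := by linarith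
  have h1ε : (0:ℝ) < 1 + ε := by linarith
  set M := colsOf A J * Xs - A with hM
  have hSM : S * M = S * colsOf A J * Xs - S * A := by
    rw [hM, Matrix.mul_sub, Matrix.mul_assoc]
  -- lower SE bound
  have hlow : (1 - δ) * frobSq M ≤ frobSq (S * M) := by
    rw [frobSq_cols M, frobSq_cols (S * M), Finset.mul_sum]
    refine Finset.sum_le_sum fun j _ => ?_
    rw [col_mul]
    exact (hSE _ (colsub_mem A J Xs j)).1
  -- the minimum value
  have hval : frobSq (S * colsOf A J * Xs - S * A) ≤ (1 + ε) * rankErrSq (S * A) r := by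
    have hmem0 : frobSq (S * colsOf A J * Xs - S * A) ∈ {t : ℝ | ∃ X : Matrix ↥J (Fin n) ℝ,
        t = frobSq (S * colsOf A J * X - S * A)} := ⟨Xs, rfl⟩
    refine le_trans (le_csInf ⟨_, hmem0⟩ ?_) hmin
    rintro t ⟨X, rfl⟩
    exact hXs X
  -- rank error comparison
  have hC : rankErrSq (S * A) r ≤ (1 + δ) * rankErrSq A r := by
    have hTne : Set.Nonempty {t : ℝ | ∃ B : Matrix (Fin N) (Fin n) ℝ,
        B.rank ≤ r ∧ t = frobSq (A - B)} := ⟨frobSq (A - 0), 0, by simp, rfl⟩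
    have key : ∀ t ∈ {t : ℝ | ∃ B : Matrix (Fin N) (Fin n) ℝ, B.rank ≤ r ∧ t = frobSq (A - B)},
        rankErrSq (S * A) r ≤ (1 + δ) * t := by
      rintro t ⟨B, hBr, rfl⟩
      set B' := Pmat A * B with hB'
      have hPA : Pmat A * A = A := by
        refine Pmat_mul_eq A _ A fun j => LinearMap.mem_range.mpr
          ⟨Pi.single j 1, by funext i; simp [Matrix.mulVecLin_apply, Matrix.mulVec_single]⟩
      have hABP : A - B' = Pmat A * (A - B) := by rw [Matrix.mul_sub, hPA]
      have hcolmem : ∀ j, (fun i => (A - B') i j) ∈ LinearMap.range A.mulVecLin := by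
        intro j
        rw [hABP, col_mul]
        exact Pmat_mulVec_mem A _
      have hfr1 : frobSq (A - B') ≤ frobSq (A - B) := by
        rw [frobSq_cols (A - B'), frobSq_cols (A - B)]
        refine Finset.sum_le_sum fun j _ => ?_
        rw [hABP, col_mul]
        exact Pmat_sqnorm_le A _
      have hup : frobSq (S * (A - B')) ≤ (1 + δ) * frobSq (A - B') := by
        rw [frobSq_cols (S * (A - B')), frobSq_cols (A - B'), Finset.mul_sum]
        refine Finset.sum_le_sum fun j _ => ?_
        rw [col_mul]
        exact (hSE _ (hcolmem j)).2
      have hrank : (S * B').rank ≤ r := by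
        calc (S * B').rank ≤ B'.rank := Matrix.rank_mul_le_right _ _
          _ ≤ B.rank := Matrix.rank_mul_le_right _ _
          _ ≤ r := hBr
      have hmem : frobSq (S * (A - B')) ∈ {t : ℝ | ∃ C : Matrix (Fin m) (Fin n) ℝ,
          C.rank ≤ r ∧ t = frobSq (S * A - C)} :=
        ⟨S * B', hrank, by rw [Matrix.mul_sub]⟩
      have hbdd : BddBelow {t : ℝ | ∃ C : Matrix (Fin m) (Fin n) ℝ,
          C.rank ≤ r ∧ t = frobSq (S * A - C)} :=
        ⟨0, by rintro t ⟨C, _, rfl⟩; exact frobSq_nonneg _⟩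
      calc rankErrSq (S * A) r ≤ frobSq (S * (A - B')) := csInf_le hbdd hmem
        _ ≤ (1 + δ) * frobSq (A - B') := hup
        _ ≤ (1 + δ) * frobSq (A - B) := by gcongr
    have hdivle : rankErrSq (S * A) r / (1 + δ) ≤ rankErrSq A r :=
      le_csInf hTne fun t ht => (div_le_iff₀ h1δ').mpr (by rw [mul_comm]; exact key t ht)
    calc rankErrSq (S * A) r = (1 + δ) * (rankErrSq (S * A) r / (1 + δ)) := by field_simp
      _ ≤ (1 + δ) * rankErrSq A r := by gcongr
  -- combine
  have hgoal : frobSq (A - colsOf A J * Xs) = frobSq M := by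
    rw [show A - colsOf A J * Xs = -M from (neg_sub _ _).symm, frobSq_neg]
  rw [hgoal]
  have hchain : (1 - δ) * frobSq M ≤ (1 + ε) * ((1 + δ) * rankErrSq A r) := by
    calc (1 - δ) * frobSq M ≤ frobSq (S * M) := hlow
      _ = frobSq (S * colsOf A J * Xs - S * A) := by rw [hSM]
      _ ≤ (1 + ε) * rankErrSq (S * A) r := hval
      _ ≤ (1 + ε) * ((1 + δ) * rankErrSq A r) :=
          mul_le_mul_of_nonneg_left hC (le_of_lt h1ε)
  rw [show (1 + ε) * ((1 + δ) / (1 - δ)) * rankErrSq A r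
    = (1 + ε) * ((1 + δ) * rankErrSq A r) / (1 - δ) by ring]
  rw [le_div_iff₀ h1δ]
  linarith [hchain]
end
end

section
/- Let A be a real N×n matrix, δ ∈ [0,1), and let S be a δ-SE of A. Then for every index i ≥ 1, (1−δ)·σ_i(A)² ≤ σ_i(SA)² ≤ (1+δ)·σ_i(A)², where σ_i denotes the i-th largest singular value (set to zero when i exceeds the rank of the matrix). -/
noncomputable section

/-- `svSq A i` is the square `σ_{i+1}(A)²` of the `(i+1)`-st largest singular value of `A`
(0-based indexing), i.e. the `(i+1)`-st largest eigenvalue of `AᴴA`, padded with zeros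
beyond the number of columns (hence beyond the rank). -/
def svSq {N n : ℕ} (A : Matrix (Fin N) (Fin n) ℝ) : ℕ → ℝ := fun i =>
  if h : i < n then
    (Matrix.posSemidef_conjTranspose_mul_self A).isHermitian.eigenvalues
      (Tuple.sort (Matrix.posSemidef_conjTranspose_mul_self A).isHermitian.eigenvalues
        (Fin.rev ⟨i, h⟩))
  else 0

section Aux

open Matrix Finset Module Submodule

local notation "⟪" x ", " y "⟫" => inner (𝕜 := ℝ) x y

variable {n : ℕ} {M M' : Matrix (Fin n) (Fin n) ℝ}

private lemma toEuc_eigen (hM : M.IsHermitian) (j : Fin n) :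
    Matrix.toEuclideanLin M (hM.eigenvectorBasis j)
      = hM.eigenvalues j • hM.eigenvectorBasis j := by
  apply (WithLp.equiv 2 (Fin n → ℝ)).injective
  simp only [Matrix.toEuclideanLin_apply]
  simpa using hM.mulVec_eigenvectorBasis j

private lemma rayleigh_eq (hM : M.IsHermitian) (x : EuclideanSpace ℝ (Fin n)) :
    ⟪x, Matrix.toEuclideanLin M x⟫
      = ∑ i, hM.eigenvalues i * (hM.eigenvectorBasis.repr x i)^2 := by
  set b := hM.eigenvectorBasis with hb
  have hTx : Matrix.toEuclideanLin M x = ∑ i, b.repr x i • (hM.eigenvalues i • b i) := by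
    conv_lhs => rw [← b.sum_repr x]
    rw [map_sum]
    exact Finset.sum_congr rfl fun i _ => by
      rw [_root_.map_smul, toEuc_eigen hM i]
  rw [hTx, inner_sum]
  refine Finset.sum_congr rfl fun i _ => ?_
  rw [inner_smul_right, inner_smul_right, real_inner_comm, ← b.repr_apply_apply]
  ring

private lemma norm_sq_eq (hM : M.IsHermitian) (x : EuclideanSpace ℝ (Fin n)) :
    ⟪x, x⟫ = ∑ i, (hM.eigenvectorBasis.repr x i)^2 := by
  set b := hM.eigenvectorBasis with hb
  conv_lhs => enter [3]; rw [← b.sum_repr x]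
  rw [inner_sum]
  refine Finset.sum_congr rfl fun i _ => ?_
  rw [inner_smul_right, real_inner_comm, ← b.repr_apply_apply]
  ring

private lemma repr_eq_zero_of_mem_span
    (b : OrthonormalBasis (Fin n) ℝ (EuclideanSpace ℝ (Fin n)))
    (s : Finset (Fin n)) {x : EuclideanSpace ℝ (Fin n)}
    (hx : x ∈ Submodule.span ℝ (b '' s)) {i : Fin n} (hi : i ∉ s) :
    b.repr x i = 0 := by
  rw [b.repr_apply_apply]
  have hle : Submodule.span ℝ (b '' (s : Set (Fin n)))
      ≤ LinearMap.ker ((innerSL ℝ (b i)).toLinearMap) := by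
    rw [Submodule.span_le]
    rintro y ⟨j, hj, rfl⟩
    simp only [SetLike.mem_coe, LinearMap.mem_ker, ContinuousLinearMap.coe_coe, innerSL_apply_apply]
    exact b.orthonormal.2 (fun h => hi (h ▸ hj))
  simpa using hle hx

private lemma finrank_span_basis_image
    (b : OrthonormalBasis (Fin n) ℝ (EuclideanSpace ℝ (Fin n)))
    (s : Finset (Fin n)) :
    Module.finrank ℝ (Submodule.span ℝ (b '' s)) = s.card := by
  have hg : LinearIndependent ℝ (fun j : (s : Set (Fin n)) => b j) :=
    b.orthonormal.linearIndependent.comp _ Subtype.val_injective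
  have himg : (b '' (s : Set (Fin n))) = Set.range (fun j : (s : Set (Fin n)) => b j) := by
    rw [← Set.image_eq_range]
  rw [himg, finrank_span_eq_card hg]
  simp

private lemma rayleigh_ge (hM : M.IsHermitian) (s : Finset (Fin n)) (a : ℝ)
    (ha : ∀ i ∈ s, a ≤ hM.eigenvalues i) {x : EuclideanSpace ℝ (Fin n)}
    (hx : x ∈ Submodule.span ℝ (hM.eigenvectorBasis '' s)) :
    a * ⟪x, x⟫ ≤ ⟪x, Matrix.toEuclideanLin M x⟫ := by
  rw [rayleigh_eq hM x, norm_sq_eq hM x, Finset.mul_sum]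
  rw [← Finset.sum_subset s.subset_univ
      (fun i _ hi => by rw [repr_eq_zero_of_mem_span _ s hx hi]; ring),
    ← Finset.sum_subset s.subset_univ
      (fun i _ hi => by rw [repr_eq_zero_of_mem_span _ s hx hi]; ring)]
  exact Finset.sum_le_sum fun i hi =>
    mul_le_mul_of_nonneg_right (ha i hi) (sq_nonneg _)

private lemma rayleigh_le (hM : M.IsHermitian) (s : Finset (Fin n)) (a : ℝ)
    (ha : ∀ i ∈ s, hM.eigenvalues i ≤ a) {x : EuclideanSpace ℝ (Fin n)}
    (hx : x ∈ Submodule.span ℝ (hM.eigenvectorBasis '' s)) :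
    ⟪x, Matrix.toEuclideanLin M x⟫ ≤ a * ⟪x, x⟫ := by
  rw [rayleigh_eq hM x, norm_sq_eq hM x, Finset.mul_sum]
  rw [← Finset.sum_subset s.subset_univ
      (fun i _ hi => by rw [repr_eq_zero_of_mem_span _ s hx hi]; ring),
    ← Finset.sum_subset s.subset_univ
      (fun i _ hi => by rw [repr_eq_zero_of_mem_span _ s hx hi]; ring)]
  exact Finset.sum_le_sum fun i hi =>
    mul_le_mul_of_nonneg_right (ha i hi) (sq_nonneg _)

private lemma eig_compare (hM : M.IsHermitian) (hM' : M'.IsHermitian)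
    (c : ℝ) (hc : 0 ≤ c)
    (h : ∀ x : EuclideanSpace ℝ (Fin n),
      c * ⟪x, Matrix.toEuclideanLin M x⟫ ≤ ⟪x, Matrix.toEuclideanLin M' x⟫)
    (k : Fin n) :
    c * hM.eigenvalues (Tuple.sort hM.eigenvalues k.rev)
      ≤ hM'.eigenvalues (Tuple.sort hM'.eigenvalues k.rev) := by
  set σ := Tuple.sort hM.eigenvalues with hσ
  set τ := Tuple.sort hM'.eigenvalues with hτ
  set b := hM.eigenvectorBasis with hb
  set b' := hM'.eigenvectorBasis with hb'
  set sV : Finset (Fin n) := (Finset.Ici k.rev).image σ with hsV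
  set sW : Finset (Fin n) := (Finset.Iic k.rev).image τ with hsW
  set V := Submodule.span ℝ (b '' sV) with hVdef
  set W := Submodule.span ℝ (b' '' sW) with hWdef
  have hkrev : (k.rev : ℕ) = n - 1 - k := by rw [Fin.val_rev]; omega
  have hV : finrank ℝ V = k + 1 := by
    rw [hVdef, finrank_span_basis_image, hsV,
      Finset.card_image_of_injective _ σ.injective, Fin.card_Ici]
    omega
  have hW : finrank ℝ W = n - k := by
    rw [hWdef, finrank_span_basis_image, hsW,
      Finset.card_image_of_injective _ τ.injective, Fin.card_Iic]
    omega
  have hwhole : finrank ℝ (EuclideanSpace ℝ (Fin n)) = n := by simp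
  have hsum := Submodule.finrank_sup_add_finrank_inf_eq V W
  have hsup : finrank ℝ ↥(V ⊔ W) ≤ n :=
    le_trans (Submodule.finrank_le _) (le_of_eq hwhole)
  have hpos : 0 < finrank ℝ ↥(V ⊓ W) := by
    have hk := k.isLt
    omega
  obtain ⟨x, hx0⟩ := Module.finrank_pos_iff_exists_ne_zero.mp hpos
  have hxV : (x : EuclideanSpace ℝ (Fin n)) ∈ V := x.2.1
  have hxW : (x : EuclideanSpace ℝ (Fin n)) ∈ W := x.2.2
  have hy0 : (x : EuclideanSpace ℝ (Fin n)) ≠ 0 := Submodule.coe_eq_zero.not.mpr hx0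
  have hipos : 0 < ⟪(x : EuclideanSpace ℝ (Fin n)), (x : EuclideanSpace ℝ (Fin n))⟫ := by
    rw [real_inner_self_eq_norm_sq]; exact pow_pos (norm_pos_iff.mpr hy0) 2
  have h1 : hM.eigenvalues (σ k.rev) * ⟪(x:EuclideanSpace ℝ (Fin n)), (x:EuclideanSpace ℝ (Fin n))⟫
      ≤ ⟪(x:EuclideanSpace ℝ (Fin n)), Matrix.toEuclideanLin M (x:EuclideanSpace ℝ (Fin n))⟫ := by
    refine rayleigh_ge hM sV _ ?_ hxV
    rintro i hi
    rw [hsV, Finset.mem_image] at hi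
    obtain ⟨j, hj, rfl⟩ := hi
    exact Tuple.monotone_sort hM.eigenvalues (Finset.mem_Ici.mp hj)
  have h2 : ⟪(x:EuclideanSpace ℝ (Fin n)), Matrix.toEuclideanLin M' (x:EuclideanSpace ℝ (Fin n))⟫
      ≤ hM'.eigenvalues (τ k.rev) * ⟪(x:EuclideanSpace ℝ (Fin n)), (x:EuclideanSpace ℝ (Fin n))⟫ := by
    refine rayleigh_le hM' sW _ ?_ hxW
    rintro i hi
    rw [hsW, Finset.mem_image] at hi
    obtain ⟨j, hj, rfl⟩ := hi
    exact Tuple.monotone_sort hM'.eigenvalues (Finset.mem_Iic.mp hj)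
  have hchain : (c * hM.eigenvalues (σ k.rev)) * ⟪(x:EuclideanSpace ℝ (Fin n)), (x:EuclideanSpace ℝ (Fin n))⟫
      ≤ hM'.eigenvalues (τ k.rev) * ⟪(x:EuclideanSpace ℝ (Fin n)), (x:EuclideanSpace ℝ (Fin n))⟫ := by
    calc (c * hM.eigenvalues (σ k.rev)) * _ = c * (hM.eigenvalues (σ k.rev) * _) := by ring
    _ ≤ c * ⟪(x:EuclideanSpace ℝ (Fin n)), Matrix.toEuclideanLin M (x:EuclideanSpace ℝ (Fin n))⟫ :=
        mul_le_mul_of_nonneg_left h1 hc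
    _ ≤ ⟪(x:EuclideanSpace ℝ (Fin n)), Matrix.toEuclideanLin M' (x:EuclideanSpace ℝ (Fin n))⟫ := h _
    _ ≤ _ := h2
  exact le_of_mul_le_mul_right hchain hipos

private lemma inner_toEuc_gram {N' : ℕ} (B : Matrix (Fin N') (Fin n) ℝ)
    (x : EuclideanSpace ℝ (Fin n)) :
    ⟪x, Matrix.toEuclideanLin (Bᴴ * B) x⟫
      = sqnorm (B.mulVec ((WithLp.equiv 2 (Fin n → ℝ)) x)) := by
  set v := (WithLp.equiv 2 (Fin n → ℝ)) x with hv
  have h1 : ⟪x, Matrix.toEuclideanLin (Bᴴ * B) x⟫ = v ⬝ᵥ ((Bᴴ * B) *ᵥ v) := by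
    rw [Matrix.toEuclideanLin_apply]
    simp [PiLp.inner_apply, dotProduct, RCLike.inner_apply, hv]
    exact Finset.sum_congr rfl fun _ _ => mul_comm _ _
  rw [h1, ← Matrix.mulVec_mulVec, Matrix.dotProduct_mulVec]
  have h2 : Bᴴ = Bᵀ := by
    ext i j; simp [Matrix.conjTranspose_apply]
  rw [h2, Matrix.vecMul_transpose]
  simp [sqnorm, dotProduct, sq]

end Aux

/-- If `S` is a `δ`-SE of `A`, then `(1-δ) σ_i(A)² ≤ σ_i(SA)² ≤ (1+δ) σ_i(A)²`
for every index `i`. -/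
theorem stmt6 {N n m : ℕ} (A : Matrix (Fin N) (Fin n) ℝ)
    (δ : ℝ) (hδ : δ ∈ Set.Ico (0 : ℝ) 1)
    (S : Matrix (Fin m) (Fin N) ℝ) (hSE : IsSE δ S A) :
    ∀ i : ℕ, (1 - δ) * svSq A i ≤ svSq (S * A) i ∧ svSq (S * A) i ≤ (1 + δ) * svSq A i := by
  obtain ⟨hδ0, hδ1⟩ := hδ
  intro i
  by_cases h : i < n
  · have hA := (Matrix.posSemidef_conjTranspose_mul_self A).isHermitian
    have hSA := (Matrix.posSemidef_conjTranspose_mul_self (S * A)).isHermitian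
    set k : Fin n := ⟨i, h⟩ with hk
    have hsv : svSq A i = hA.eigenvalues (Tuple.sort hA.eigenvalues k.rev) := by
      rw [svSq, dif_pos h]
    have hsv' : svSq (S * A) i = hSA.eigenvalues (Tuple.sort hSA.eigenvalues k.rev) := by
      rw [svSq, dif_pos h]
    have hmem : ∀ v : Fin n → ℝ, A.mulVec v ∈ LinearMap.range A.mulVecLin :=
      fun v => ⟨v, by simp [Matrix.mulVecLin_apply]⟩
    have hSAv : ∀ v : Fin n → ℝ, (S * A).mulVec v = S.mulVec (A.mulVec v) :=
      fun v => (Matrix.mulVec_mulVec v S A).symm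
    constructor
    · rw [hsv, hsv']
      refine eig_compare hA hSA (1 - δ) (by linarith) (fun x => ?_) k
      rw [inner_toEuc_gram A x, inner_toEuc_gram (S * A) x]
      rw [hSAv]
      exact (hSE _ (hmem _)).1
    · rw [hsv, hsv']
      have h1δ : (0:ℝ) < 1 + δ := by linarith
      have hcmp := eig_compare hSA hA (1 / (1 + δ)) (by positivity) (fun x => ?_) k
      · rw [div_mul_eq_mul_div, div_le_iff₀ h1δ] at hcmp
        linarith [hcmp]
      · rw [inner_toEuc_gram A x, inner_toEuc_gram (S * A) x, hSAv]
        have := (hSE _ (hmem ((WithLp.equiv 2 (Fin n → ℝ)) x))).2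
        rw [div_mul_eq_mul_div, div_le_iff₀ h1δ]
        linarith
  · have hz : svSq A i = 0 := by rw [svSq, dif_neg h]
    have hz' : svSq (S * A) i = 0 := by rw [svSq, dif_neg h]
    rw [hz, hz']
    constructor <;> simp
end
end

section
/- Let A be a real N×n matrix, δ ∈ [0,1), and let S be a δ-SE of A. Then for every r ≥ 0, Σ_{i>r} σ_i(SA)² ≤ (1+δ)·Σ_{i>r} σ_i(A)²; equivalently, the best rank-r Frobenius approximation errors satisfy ‖SA − (SA)^{(r)}‖² ≤ (1+δ)·‖A − A^{(r)}‖². -/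
noncomputable section

open scoped RealInnerProductSpace Matrix ComplexConjugate

/-! ### Auxiliary lemmas -/

lemma aux_card_filter_lt {n k : ℕ} (hk : k ≤ n) :
    (Finset.univ.filter (fun i : Fin n => (i : ℕ) < k)).card = k := by
  rcases eq_or_lt_of_le hk with rfl | h
  · rw [Finset.filter_true_of_mem (fun i _ => i.isLt), Finset.card_univ, Fintype.card_fin]
  · have : Finset.univ.filter (fun i : Fin n => (i : ℕ) < k) = Finset.Iio ⟨k, h⟩ := by
      ext i; simp [Fin.lt_def]
    rw [this, Fin.card_Iio]

lemma aux_sum_le_weighted {n k : ℕ} (lam c : Fin n → ℝ) (hmono : Monotone lam)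
    (hc0 : ∀ i, 0 ≤ c i) (hc1 : ∀ i, c i ≤ 1) (hsum : ∑ i, c i = k) (hk : k ≤ n) :
    ∑ i ∈ Finset.univ.filter (fun i : Fin n => (i : ℕ) < k), lam i ≤ ∑ i, lam i * c i := by
  rcases Nat.eq_zero_or_pos k with rfl | hkpos
  · have hc : ∀ i ∈ Finset.univ, c i = 0 := by
      rw [← Finset.sum_eq_zero_iff_of_nonneg (fun i _ => hc0 i)]
      simpa using hsum
    simp only [Nat.not_lt_zero, Finset.filter_false, Finset.sum_empty]
    rw [Finset.sum_congr rfl (fun i hi => by rw [hc i hi, mul_zero])]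
    simp
  · set t : ℝ := lam ⟨k - 1, lt_of_lt_of_le (Nat.sub_lt hkpos one_pos) hk⟩ with ht
    have hlow : ∀ i : Fin n, (i : ℕ) < k → lam i ≤ t :=
      fun i hi => hmono (by simp only [Fin.le_def]; omega)
    have hhigh : ∀ i : Fin n, ¬ (i : ℕ) < k → t ≤ lam i :=
      fun i hi => hmono (by simp only [Fin.le_def]; omega)
    set F := Finset.univ.filter (fun i : Fin n => (i : ℕ) < k) with hF
    have hcard : F.card = k := aux_card_filter_lt hk
    have hsplit : ∑ i, lam i * c i
        = ∑ i ∈ F, lam i * c i + ∑ i ∈ Fᶜ, lam i * c i :=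
      (Finset.sum_add_sum_compl F _).symm
    have h1 : ∑ i ∈ Fᶜ, t * c i ≤ ∑ i ∈ Fᶜ, lam i * c i := by
      refine Finset.sum_le_sum fun i hi => mul_le_mul_of_nonneg_right ?_ (hc0 i)
      exact hhigh i (by simpa [hF] using (Finset.mem_compl.mp hi))
    have hcsplit : ∑ i ∈ F, c i + ∑ i ∈ Fᶜ, c i = (k : ℝ) := by
      rw [Finset.sum_add_sum_compl]; exact hsum
    have h2 : ∑ i ∈ Fᶜ, t * c i = t * ((k : ℝ) - ∑ i ∈ F, c i) := by
      rw [← Finset.mul_sum]; congr 1; linarith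
    have h3 : ∑ i ∈ F, lam i ≤ ∑ i ∈ F, lam i * c i + t * ((k:ℝ) - ∑ i ∈ F, c i) := by
      have hkF : (k : ℝ) = ∑ i ∈ F, (1 : ℝ) := by rw [Finset.sum_const, hcard]; simp
      rw [hkF, ← Finset.sum_sub_distrib, Finset.mul_sum, ← Finset.sum_add_distrib]
      refine Finset.sum_le_sum fun i hi => ?_
      have hiF : (i : ℕ) < k := by simpa [hF] using hi
      nlinarith [hlow i hiF, hc1 i, hc0 i]
    calc ∑ i ∈ F, lam i ≤ ∑ i ∈ F, lam i * c i + t * ((k:ℝ) - ∑ i ∈ F, c i) := h3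
      _ = ∑ i ∈ F, lam i * c i + ∑ i ∈ Fᶜ, t * c i := by rw [h2]
      _ ≤ ∑ i ∈ F, lam i * c i + ∑ i ∈ Fᶜ, lam i * c i := by linarith
      _ = ∑ i, lam i * c i := hsplit.symm

lemma aux_quadform_expand {n : ℕ} (G : Matrix (Fin n) (Fin n) ℝ) (hG : G.IsHermitian)
    (v : EuclideanSpace ℝ (Fin n)) :
    ⟪v, (WithLp.toLp 2 (G.mulVec v) : EuclideanSpace ℝ (Fin n))⟫ =
      ∑ i, hG.eigenvalues i * ⟪hG.eigenvectorBasis i, v⟫ ^ 2 := by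
  set u := hG.eigenvectorBasis with hu
  have hrepr : (∑ i, ⟪u i, v⟫ • u i : EuclideanSpace ℝ (Fin n)) = v := u.sum_repr' v
  have hmul : (WithLp.toLp 2 (G.mulVec v) : EuclideanSpace ℝ (Fin n))
      = ∑ i, (⟪u i, v⟫ * hG.eigenvalues i) • u i := by
    conv_lhs => rw [← hrepr]
    have h1 : G.mulVec (∑ i, ⟪u i, v⟫ • u i : EuclideanSpace ℝ (Fin n))
        = ∑ i, ⟪u i, v⟫ • (G.mulVec (u i)) := by
      rw [show (G.mulVec : (Fin n → ℝ) → (Fin n → ℝ)) = G.mulVecLin from rfl]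
      simp [map_sum]
    rw [h1, WithLp.toLp_sum]
    refine Finset.sum_congr rfl fun i _ => ?_
    rw [show (G.mulVec (u i) : Fin n → ℝ) = hG.eigenvalues i • (u i : Fin n → ℝ) from
      hG.mulVec_eigenvectorBasis i]
    rw [mul_smul, WithLp.toLp_smul, WithLp.toLp_smul, WithLp.toLp_ofLp]
  rw [hmul, inner_sum]
  refine Finset.sum_congr rfl fun i _ => ?_
  rw [real_inner_smul_right, real_inner_comm v (u i)]
  ring

lemma aux_kyfan_lower {n k : ℕ} (G : Matrix (Fin n) (Fin n) ℝ) (hG : G.IsHermitian) (hk : k ≤ n)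
    (v : Fin k → EuclideanSpace ℝ (Fin n)) (hv : Orthonormal ℝ v) :
    ∑ i ∈ Finset.univ.filter (fun i : Fin n => (i : ℕ) < k),
        (hG.eigenvalues ∘ Tuple.sort hG.eigenvalues) i
      ≤ ∑ j, ⟪v j, (WithLp.toLp 2 (G.mulVec (v j)) : EuclideanSpace ℝ (Fin n))⟫ := by
  set u := hG.eigenvectorBasis with hu
  set lam := hG.eigenvalues with hlam
  set c : Fin n → ℝ := fun i => ∑ j, ⟪u i, v j⟫ ^ 2 with hc
  have hrhs : ∑ j, ⟪v j, (WithLp.toLp 2 (G.mulVec (v j)) : EuclideanSpace ℝ (Fin n))⟫ = ∑ i, lam i * c i := by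
    have h1 : ∀ j, ⟪v j, (WithLp.toLp 2 (G.mulVec (v j)) : EuclideanSpace ℝ (Fin n))⟫
        = ∑ i, lam i * ⟪u i, v j⟫ ^ 2 := fun j => aux_quadform_expand G hG (v j)
    rw [Finset.sum_congr rfl fun j _ => h1 j, Finset.sum_comm]
    exact Finset.sum_congr rfl fun i _ => (Finset.mul_sum _ _ _).symm
  have hc0 : ∀ i, 0 ≤ c i := fun i => Finset.sum_nonneg fun j _ => sq_nonneg _
  have hc1 : ∀ i, c i ≤ 1 := by
    intro i
    have hb := hv.sum_inner_products_le (s := Finset.univ) (u i)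
    have hnorm : ‖u i‖ = 1 := u.orthonormal.1 i
    calc c i = ∑ j, ‖⟪v j, u i⟫‖ ^ 2 := by
          refine Finset.sum_congr rfl fun j _ => ?_
          rw [real_inner_comm, Real.norm_eq_abs, sq_abs]
      _ ≤ ‖u i‖ ^ 2 := hb
      _ = 1 := by rw [hnorm]; norm_num
  have hcsum : ∑ i, c i = k := by
    rw [Finset.sum_comm]
    have h2 : ∀ j, ∑ i, ⟪u i, v j⟫ ^ 2 = 1 := by
      intro j
      have hp := u.sum_inner_mul_inner (v j) (v j)
      have h3 : ∀ i, ⟪v j, u i⟫ * ⟪u i, v j⟫ = ⟪u i, v j⟫ ^ 2 := fun i => by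
        rw [real_inner_comm (v j) (u i)]; ring
      rw [Finset.sum_congr rfl fun i _ => h3 i] at hp
      rw [hp, real_inner_self_eq_norm_sq, hv.1 j, one_pow]
    rw [Finset.sum_congr rfl fun j _ => h2 j]
    simp
  have hperm : ∑ i, lam i * c i
      = ∑ i, (lam ∘ Tuple.sort lam) i * (c ∘ Tuple.sort lam) i :=
    (Equiv.sum_comp (Tuple.sort lam) (fun i => lam i * c i)).symm
  rw [hrhs, hperm]
  refine aux_sum_le_weighted _ _ (Tuple.monotone_sort lam)
    (fun i => hc0 _) (fun i => hc1 _) ?_ hk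
  rw [show ∑ i, (c ∘ ⇑(Tuple.sort lam)) i = ∑ i, c i from Equiv.sum_comp (Tuple.sort lam) c]
  exact hcsum

lemma aux_sum_filter_eq {n k : ℕ} (hk : k ≤ n) (f : Fin n → ℝ) :
    ∑ i ∈ Finset.univ.filter (fun i : Fin n => (i : ℕ) < k), f i
      = ∑ j : Fin k, f (Fin.castLE hk j) := by
  have himg : Finset.univ.filter (fun i : Fin n => (i : ℕ) < k)
      = Finset.univ.image (Fin.castLE hk) := by
    ext i
    simp only [Finset.mem_filter, Finset.mem_univ, true_and, Finset.mem_image]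
    constructor
    · intro hi; exact ⟨⟨(i : ℕ), hi⟩, rfl⟩
    · rintro ⟨j, rfl⟩; exact j.isLt
  rw [himg, Finset.sum_image (fun a _ b _ h => Fin.castLE_injective hk h)]

/-- Ky Fan style monotonicity of sorted-eigenvalue head sums under quadratic-form domination. -/
lemma aux_tail_le {n : ℕ} (G H : Matrix (Fin n) (Fin n) ℝ) (hG : G.IsHermitian)
    (hH : H.IsHermitian) (t : ℝ)
    (hq : ∀ y : EuclideanSpace ℝ (Fin n),
      ⟪y, (WithLp.toLp 2 (H.mulVec y) : EuclideanSpace ℝ (Fin n))⟫ ≤ t * ⟪y, (WithLp.toLp 2 (G.mulVec y) : EuclideanSpace ℝ (Fin n))⟫)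
    (k : ℕ) (hk : k ≤ n) :
    ∑ i ∈ Finset.univ.filter (fun i : Fin n => (i : ℕ) < k),
        (hH.eigenvalues ∘ Tuple.sort hH.eigenvalues) i
      ≤ t * ∑ i ∈ Finset.univ.filter (fun i : Fin n => (i : ℕ) < k),
        (hG.eigenvalues ∘ Tuple.sort hG.eigenvalues) i := by
  set σ := Tuple.sort hG.eigenvalues with hσ
  set w : Fin k → EuclideanSpace ℝ (Fin n) :=
    fun j => hG.eigenvectorBasis (σ (Fin.castLE hk j)) with hw
  have hwo : Orthonormal ℝ w :=
    hG.eigenvectorBasis.orthonormal.comp _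
      (σ.injective.comp (Fin.castLE_injective hk))
  have hGw : ∀ j, ⟪w j, (WithLp.toLp 2 (G.mulVec (w j)) : EuclideanSpace ℝ (Fin n))⟫
      = (hG.eigenvalues ∘ σ) (Fin.castLE hk j) := by
    intro j
    rw [show (G.mulVec (w j) : Fin n → ℝ)
        = hG.eigenvalues (σ (Fin.castLE hk j)) • (w j : Fin n → ℝ) from
      hG.mulVec_eigenvectorBasis _]
    rw [WithLp.toLp_smul, WithLp.toLp_ofLp, real_inner_smul_right, real_inner_self_eq_norm_sq,
      hG.eigenvectorBasis.orthonormal.1 _, one_pow, mul_one]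
    rfl
  have hsumG : ∑ i ∈ Finset.univ.filter (fun i : Fin n => (i : ℕ) < k),
      (hG.eigenvalues ∘ σ) i = ∑ j, ⟪w j, (WithLp.toLp 2 (G.mulVec (w j)) : EuclideanSpace ℝ (Fin n))⟫ := by
    rw [Finset.sum_congr rfl fun j (_ : j ∈ Finset.univ) => hGw j,
      aux_sum_filter_eq hk (hG.eigenvalues ∘ σ)]
  calc ∑ i ∈ Finset.univ.filter (fun i : Fin n => (i : ℕ) < k),
        (hH.eigenvalues ∘ Tuple.sort hH.eigenvalues) i
      ≤ ∑ j, ⟪w j, (WithLp.toLp 2 (H.mulVec (w j)) : EuclideanSpace ℝ (Fin n))⟫ :=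
        aux_kyfan_lower H hH hk w hwo
    _ ≤ ∑ j, t * ⟪w j, (WithLp.toLp 2 (G.mulVec (w j)) : EuclideanSpace ℝ (Fin n))⟫ :=
        Finset.sum_le_sum fun j _ => hq (w j)
    _ = t * ∑ j, ⟪w j, (WithLp.toLp 2 (G.mulVec (w j)) : EuclideanSpace ℝ (Fin n))⟫ := by
        rw [Finset.mul_sum]
    _ = t * ∑ i ∈ Finset.univ.filter (fun i : Fin n => (i : ℕ) < k),
        (hG.eigenvalues ∘ σ) i := by rw [hsumG]

lemma aux_sum_Ico_svSq {N n : ℕ} (M : Matrix (Fin N) (Fin n) ℝ) (r : ℕ) :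
    ∑ i ∈ Finset.Ico r n, svSq M i
      = ∑ i ∈ Finset.univ.filter (fun i : Fin n => (i : ℕ) < n - r),
        ((Matrix.posSemidef_conjTranspose_mul_self M).isHermitian.eigenvalues ∘
          Tuple.sort (Matrix.posSemidef_conjTranspose_mul_self M).isHermitian.eigenvalues) i := by
  refine Finset.sum_bij' (fun a ha => Fin.rev ⟨a, (Finset.mem_Ico.mp ha).2⟩)
    (fun b _ => (Fin.rev b : Fin n).val) ?_ ?_ ?_ ?_ ?_
  · intro a ha
    have h := Finset.mem_Ico.mp ha
    simp only [Finset.mem_filter, Finset.mem_univ, true_and, Fin.val_rev]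
    omega
  · intro b hb
    have h : (b : ℕ) < n - r := by simpa using hb
    have hb' := b.isLt
    simp only [Finset.mem_Ico, Fin.val_rev]
    omega
  · intro a ha
    have h := Finset.mem_Ico.mp ha
    simp only [Fin.val_rev]
    omega
  · intro b hb
    apply Fin.ext
    simp only [Fin.val_rev]
    omega
  · intro a ha
    have h := (Finset.mem_Ico.mp ha).2
    simp only [svSq, h, dif_pos, Function.comp_apply]

lemma aux_sqnorm_norm {N : ℕ} (x : EuclideanSpace ℝ (Fin N)) : sqnorm x = ‖x‖ ^ 2 := by
  rw [EuclideanSpace.norm_eq, Real.sq_sqrt (Finset.sum_nonneg fun i _ => sq_nonneg _)]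
  simp [sqnorm, Real.norm_eq_abs, sq_abs]

lemma aux_inner_gram {N n : ℕ} (M : Matrix (Fin N) (Fin n) ℝ) (y : EuclideanSpace ℝ (Fin n)) :
    ⟪y, (WithLp.toLp 2 ((Mᴴ * M).mulVec y) : EuclideanSpace ℝ (Fin n))⟫ = sqnorm (M.mulVec y) := by
  have h0 : ⟪y, (WithLp.toLp 2 ((Mᴴ * M).mulVec y) : EuclideanSpace ℝ (Fin n))⟫
      = dotProduct (y : Fin n → ℝ) ((Mᴴ * M).mulVec y) := by
    simp [PiLp.inner_apply, RCLike.inner_apply, dotProduct, mul_comm]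
  rw [h0, ← Matrix.mulVec_mulVec, Matrix.dotProduct_mulVec]
  have h1 : Matrix.vecMul (y : Fin n → ℝ) Mᴴ = M.mulVec y := by
    rw [Matrix.conjTranspose_eq_transpose_of_trivial]
    exact Matrix.vecMul_transpose M y
  rw [h1]
  simp [sqnorm, dotProduct, sq]

lemma aux_frobSq_col {N n : ℕ} (M : Matrix (Fin N) (Fin n) ℝ) :
    frobSq M = ∑ j, sqnorm (fun i => M i j) := by
  rw [frobSq, Finset.sum_comm]
  rfl

lemma aux_frobSq_nonneg {N n : ℕ} (M : Matrix (Fin N) (Fin n) ℝ) : 0 ≤ frobSq M :=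
  Finset.sum_nonneg fun _ _ => Finset.sum_nonneg fun _ _ => sq_nonneg _

lemma aux_col_mul {m N n : ℕ} (X : Matrix (Fin m) (Fin N) ℝ) (Y : Matrix (Fin N) (Fin n) ℝ)
    (j : Fin n) : (fun i => (X * Y) i j) = X.mulVec (fun l => Y l j) := by
  funext i
  simp [Matrix.mul_apply, Matrix.mulVec, dotProduct]

lemma aux_col_single {N n : ℕ} (A : Matrix (Fin N) (Fin n) ℝ) (j : Fin n) :
    (fun i => A i j) = A.mulVec (Pi.single j 1) := by
  funext i
  simp [Matrix.mulVec, dotProduct, Pi.single_apply]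

/-- If `S` is a `δ`-SE of `A`, then for every `r ≥ 0`,
`Σ_{i>r} σ_i(SA)² ≤ (1+δ) Σ_{i>r} σ_i(A)²` (tail sums in 0-based indexing over
`i ∈ [r, n)`); equivalently `‖SA - (SA)^{(r)}‖² ≤ (1+δ) ‖A - A^{(r)}‖²`. -/
theorem stmt7 {N n m : ℕ} (A : Matrix (Fin N) (Fin n) ℝ)
    (δ : ℝ) (hδ : δ ∈ Set.Ico (0 : ℝ) 1)
    (S : Matrix (Fin m) (Fin N) ℝ) (hSE : IsSE δ S A) :
    ∀ r : ℕ,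
      (∑ i ∈ Finset.Ico r n, svSq (S * A) i ≤ (1 + δ) * ∑ i ∈ Finset.Ico r n, svSq A i) ∧
        rankErrSq (S * A) r ≤ (1 + δ) * rankErrSq A r := by
  obtain ⟨hδ0, hδ1⟩ := hδ
  have h1δ : (0:ℝ) < 1 + δ := by linarith
  -- quadratic form domination
  have hquad : ∀ y : EuclideanSpace ℝ (Fin n),
      ⟪y, (WithLp.toLp 2 (((S*A)ᴴ * (S*A)).mulVec y) : EuclideanSpace ℝ (Fin n))⟫
        ≤ (1+δ) * ⟪y, (WithLp.toLp 2 ((Aᴴ * A).mulVec y) : EuclideanSpace ℝ (Fin n))⟫ := by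
    intro y
    rw [aux_inner_gram, aux_inner_gram]
    rw [show (S*A).mulVec y = S.mulVec (A.mulVec y) from (Matrix.mulVec_mulVec y S A).symm]
    exact (hSE (A.mulVec y) ⟨_, rfl⟩).2
  -- projection onto the column space of A
  set K : Submodule ℝ (Fin N → ℝ) := LinearMap.range A.mulVecLin with hK
  set E := WithLp.linearEquiv 2 ℝ (Fin N → ℝ) with hE
  set KE : Submodule ℝ (EuclideanSpace ℝ (Fin N)) := K.comap E.toLinearMap with hKE
  set lin : (Fin N → ℝ) →ₗ[ℝ] (Fin N → ℝ) :=
    E.toLinearMap ∘ₗ (KE.starProjection).toLinearMap ∘ₗ E.symm.toLinearMap with hlin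
  set P : Matrix (Fin N) (Fin N) ℝ := LinearMap.toMatrix' lin with hPdef
  have hP : ∀ x : Fin N → ℝ, P.mulVec x = lin x := by
    intro x
    rw [show P.mulVec x = Matrix.toLin' P x from rfl]
    rw [show Matrix.toLin' P = lin from Matrix.toLin'_toMatrix' lin]
  have hlin_mem : ∀ x : Fin N → ℝ, lin x ∈ K := by
    intro x
    have h : KE.starProjection (E.symm x) ∈ KE := by simp
    exact h
  have hfix : ∀ x ∈ K, lin x = x := by
    intro x hx
    have hx' : E.symm x ∈ KE := hx
    show E (KE.starProjection (E.symm x)) = x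
    rw [KE.starProjection_eq_self_iff.mpr hx']
    rfl
  have hnorm : ∀ x : Fin N → ℝ, sqnorm (lin x) ≤ sqnorm x := by
    intro x
    have h1 : sqnorm (lin x) = ‖KE.starProjection (E.symm x)‖ ^ 2 := aux_sqnorm_norm _
    have h2 : sqnorm x = ‖E.symm x‖ ^ 2 := aux_sqnorm_norm _
    rw [h1, h2]
    gcongr
    exact KE.norm_starProjection_apply_le _
  intro r
  constructor
  · -- part (a)
    rw [aux_sum_Ico_svSq (S*A) r, aux_sum_Ico_svSq A r]
    exact aux_tail_le (Aᴴ * A) ((S*A)ᴴ * (S*A))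
      (Matrix.posSemidef_conjTranspose_mul_self A).isHermitian
      (Matrix.posSemidef_conjTranspose_mul_self (S*A)).isHermitian
      (1+δ) hquad (n - r) (Nat.sub_le n r)
  · -- part (b)
    have hBddS : BddBelow {t : ℝ | ∃ B : Matrix (Fin m) (Fin n) ℝ,
        B.rank ≤ r ∧ t = frobSq ((S*A) - B)} :=
      ⟨0, fun t ⟨B, _, ht⟩ => ht ▸ aux_frobSq_nonneg _⟩
    have hNeA : {t : ℝ | ∃ B : Matrix (Fin N) (Fin n) ℝ,
        B.rank ≤ r ∧ t = frobSq (A - B)}.Nonempty :=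
      ⟨frobSq (A - 0), 0, by simp [Matrix.rank_zero], rfl⟩
    have key : ∀ B : Matrix (Fin N) (Fin n) ℝ, B.rank ≤ r →
        rankErrSq (S * A) r ≤ (1 + δ) * frobSq (A - B) := by
      intro B hB
      have hrankC : (S * (P * B)).rank ≤ r :=
        le_trans (le_trans (Matrix.rank_mul_le_right S (P*B))
          (Matrix.rank_mul_le_right P B)) hB
      have h4 : rankErrSq (S*A) r ≤ frobSq ((S*A) - S*(P*B)) :=
        csInf_le hBddS ⟨S*(P*B), hrankC, rfl⟩
      -- columnwise analysis
      have hcol : ∀ j : Fin n,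
          sqnorm (fun i => ((S*A) - S*(P*B)) i j)
            ≤ (1+δ) * sqnorm (fun i => (A - B) i j) := by
        intro j
        set Acol : Fin N → ℝ := fun i => A i j with hAc
        set Bcol : Fin N → ℝ := fun i => B i j with hBc
        have hAmem : Acol ∈ K := ⟨Pi.single j 1, (aux_col_single A j).symm⟩
        have hpc : (fun i => (P*B) i j) = (fun i => lin Bcol i) := by
          rw [aux_col_mul P B j, hP]
        set d : Fin N → ℝ := fun i => Acol i - lin Bcol i with hd
        have hdmem : d ∈ K := K.sub_mem hAmem (hlin_mem Bcol)
        have h6 : (fun i => ((S*A) - S*(P*B)) i j) = S.mulVec d := by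
          funext i
          have hsplit : ((S*A) - S*(P*B)) i j = (S*A) i j - (S*(P*B)) i j := rfl
          rw [hsplit]
          have e1 : (S*A) i j = S.mulVec Acol i := congrFun (aux_col_mul S A j) i
          have e2 : (fun i => (S*(P*B)) i j) = S.mulVec (fun l => lin Bcol l) := by
            rw [aux_col_mul S (P*B) j]
            exact congrArg S.mulVec hpc
          rw [e1, congrFun e2 i,
            show d = Acol - (fun l => lin Bcol l) from rfl, Matrix.mulVec_sub]
          rfl
        have h7 : sqnorm d ≤ sqnorm (fun i => (A - B) i j) := by
          set e : Fin N → ℝ := fun i => Acol i - Bcol i with he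
          have hdl : d = lin e := by
            have h9 : lin e = lin Acol - lin Bcol := map_sub lin Acol Bcol
            rw [hfix Acol hAmem] at h9
            exact h9.symm
          rw [hdl]
          exact hnorm e
        have h5 : sqnorm (S.mulVec d) ≤ (1+δ) * sqnorm d := (hSE d hdmem).2
        rw [h6]
        calc sqnorm (S.mulVec d) ≤ (1+δ) * sqnorm d := h5
          _ ≤ (1+δ) * sqnorm (fun i => (A - B) i j) :=
            mul_le_mul_of_nonneg_left h7 (le_of_lt h1δ)
      have h8 : frobSq ((S*A) - S*(P*B)) ≤ (1+δ) * frobSq (A - B) := by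
        rw [aux_frobSq_col, aux_frobSq_col, Finset.mul_sum]
        exact Finset.sum_le_sum fun j _ => hcol j
      linarith
    refine le_of_forall_pos_le_add ?_
    intro ε hε
    obtain ⟨t, ⟨B, hB, rfl⟩, hlt⟩ :=
      Real.lt_sInf_add_pos hNeA (div_pos hε h1δ)
    calc rankErrSq (S*A) r ≤ (1+δ) * frobSq (A - B) := key B hB
      _ ≤ (1+δ) * (rankErrSq A r + ε/(1+δ)) :=
          mul_le_mul_of_nonneg_left (le_of_lt hlt) (le_of_lt h1δ)
      _ = (1+δ) * rankErrSq A r + ε := by field_simp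
end
end

section
/- Let M be a real N×k matrix, a ∈ ℝ^N, δ ∈ [0,1), and let S be a real matrix with N columns such that (1−δ)‖x‖² ≤ ‖Sx‖² ≤ (1+δ)‖x‖² for every x in the subspace spanned by the columns of M together with a. Let a₀ be the orthogonal projection of a onto the column space of M, and let a_s = M u_s where u_s minimizes u ↦ ‖SMu − Sa‖. Then ‖a₀ − a_s‖² ≤ (δ/(1−δ)) · ‖a − a₀‖², and consequently ‖a − a_s‖² ≤ (1−δ)^{−1} · ‖a − a₀‖². -/
open Matrix

noncomputable section

lemma sqnorm_nonneg {α : Type*} [Fintype α] (v : α → ℝ) : 0 ≤ sqnorm v :=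
  Finset.sum_nonneg fun _ _ => sq_nonneg _

lemma sqnorm_eq_dot {α : Type*} [Fintype α] (v : α → ℝ) : sqnorm v = v ⬝ᵥ v := by
  unfold sqnorm dotProduct
  exact Finset.sum_congr rfl fun i _ => by ring

lemma sqnorm_sub {α : Type*} [Fintype α] (x y : α → ℝ) :
    sqnorm (x - y) = sqnorm x - 2 * (x ⬝ᵥ y) + sqnorm y := by
  unfold sqnorm dotProduct
  rw [Finset.mul_sum, ← Finset.sum_sub_distrib, ← Finset.sum_add_distrib]
  exact Finset.sum_congr rfl fun i _ => by simp [Pi.sub_apply]; ring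

lemma sqnorm_add_smul {α : Type*} [Fintype α] (x y : α → ℝ) (t : ℝ) :
    sqnorm (x + t • y) = sqnorm x + 2 * t * (y ⬝ᵥ x) + t ^ 2 * sqnorm y := by
  unfold sqnorm dotProduct
  rw [Finset.mul_sum, Finset.mul_sum, ← Finset.sum_add_distrib, ← Finset.sum_add_distrib]
  exact Finset.sum_congr rfl fun i _ => by simp [Pi.add_apply, Pi.smul_apply]; ring

lemma aux_quad (β γ : ℝ) (hγ : 0 ≤ γ) (h : ∀ t : ℝ, 0 ≤ 2 * t * β + t ^ 2 * γ) : β = 0 := by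
  rcases eq_or_lt_of_le hγ with h0 | h0
  · have h1 := h (-β)
    nlinarith
  · have h1 := h (-β / γ)
    have h2 : 0 ≤ (2 * (-β / γ) * β + (-β / γ) ^ 2 * γ) * γ := mul_nonneg h1 h0.le
    have h3 : (2 * (-β / γ) * β + (-β / γ) ^ 2 * γ) * γ = -β ^ 2 := by
      field_simp
      ring
    nlinarith

/-- Sketched least squares for a single right-hand side (Lemma `step1`):
if `S` embeds the subspace spanned by the columns of `M` together with `a` with
distortion `δ`, `a₀` is the orthogonal projection of `a` onto the column space of `M`,
and `u_s` minimizes `u ↦ ‖S M u - S a‖`, then with `a_s = M u_s`: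
`‖a₀ - a_s‖² ≤ δ/(1-δ) ‖a - a₀‖²` and `‖a - a_s‖² ≤ (1-δ)⁻¹ ‖a - a₀‖²`. -/
theorem stmt9 {N k m : ℕ} (M : Matrix (Fin N) (Fin k) ℝ) (a : Fin N → ℝ)
    (δ : ℝ) (hδ : δ ∈ Set.Ico (0 : ℝ) 1)
    (S : Matrix (Fin m) (Fin N) ℝ)
    (hSE : ∀ x ∈ Submodule.span ℝ (insert a (Set.range fun j => fun i => M i j)),
      (1 - δ) * sqnorm x ≤ sqnorm (S.mulVec x) ∧ sqnorm (S.mulVec x) ≤ (1 + δ) * sqnorm x)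
    (a₀ : Fin N → ℝ)
    (ha₀mem : a₀ ∈ Submodule.span ℝ (Set.range fun j => fun i => M i j))
    (ha₀orth : ∀ y ∈ Submodule.span ℝ (Set.range fun j => fun i => M i j),
      ∑ i, (a i - a₀ i) * y i = 0)
    (us : Fin k → ℝ)
    (hus : ∀ u : Fin k → ℝ,
      sqnorm (S.mulVec (M.mulVec us) - S.mulVec a) ≤ sqnorm (S.mulVec (M.mulVec u) - S.mulVec a)) :
    sqnorm (a₀ - M.mulVec us) ≤ (δ / (1 - δ)) * sqnorm (a - a₀) ∧
      sqnorm (a - M.mulVec us) ≤ (1 - δ)⁻¹ * sqnorm (a - a₀) := by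
  obtain ⟨hδ0, hδ1⟩ := hδ
  have h1δ : (0:ℝ) < 1 - δ := by linarith
  set colspan := Submodule.span ℝ (Set.range fun j => fun i : Fin N => M i j) with hcolspan
  -- column span is range of mulVec
  have hrange : ∀ v : Fin k → ℝ, M.mulVec v ∈ colspan := by
    intro v
    rw [hcolspan]
    have : (Set.range fun j => fun i : Fin N => M i j) = Set.range M.col := rfl
    rw [this, ← Matrix.range_mulVecLin]
    exact ⟨v, rfl⟩
  obtain ⟨u₀, hu₀⟩ : ∃ u₀, M.mulVec u₀ = a₀ := by
    have : a₀ ∈ LinearMap.range M.mulVecLin := by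
      rw [Matrix.range_mulVecLin]
      exact ha₀mem
    exact this
  set K := Submodule.span ℝ (insert a (Set.range fun j => fun i : Fin N => M i j)) with hK
  have hcolK : colspan ≤ K := Submodule.span_mono (Set.subset_insert _ _)
  have haK : a ∈ K := Submodule.subset_span (Set.mem_insert _ _)
  set b := a - a₀ with hb
  set w := M.mulVec us - a₀ with hw
  have hwcol : w ∈ colspan := Submodule.sub_mem _ (hrange us) ha₀mem
  have hbK : b ∈ K := Submodule.sub_mem _ haK (hcolK ha₀mem)
  have hwK : w ∈ K := hcolK hwcol
  have hwbK : w - b ∈ K := Submodule.sub_mem _ hwK hbK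
  -- orthogonality
  have horth : b ⬝ᵥ w = 0 := by
    have := ha₀orth w hwcol
    simpa [dotProduct, hb] using this
  -- normal equation
  have hne : ∀ u : Fin k → ℝ,
      (S.mulVec (M.mulVec u)) ⬝ᵥ (S.mulVec (M.mulVec us) - S.mulVec a) = 0 := by
    intro u
    apply aux_quad _ (sqnorm (S.mulVec (M.mulVec u))) (sqnorm_nonneg _)
    intro t
    have h := hus (us + t • u)
    have heq : S.mulVec (M.mulVec (us + t • u)) - S.mulVec a
        = (S.mulVec (M.mulVec us) - S.mulVec a) + t • S.mulVec (M.mulVec u) := by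
      rw [Matrix.mulVec_add, Matrix.mulVec_smul, Matrix.mulVec_add, Matrix.mulVec_smul]
      abel
    rw [heq, sqnorm_add_smul] at h
    linarith
  -- specialize normal equation to get Sw ⬝ (Sw - Sb) = 0
  have hwmb : w - b = M.mulVec us - a := by rw [hw, hb]; abel
  have hSwb_eq : S.mulVec (M.mulVec us) - S.mulVec a = S.mulVec w - S.mulVec b := by
    rw [← Matrix.mulVec_sub, ← Matrix.mulVec_sub, hwmb]
  have hMw : M.mulVec (us - u₀) = w := by
    rw [Matrix.mulVec_sub, hu₀]
  have hne' : (S.mulVec w) ⬝ᵥ (S.mulVec w - S.mulVec b) = 0 := by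
    have := hne (us - u₀)
    rwa [hMw, hSwb_eq] at this
  have hdot : (S.mulVec w) ⬝ᵥ (S.mulVec b) = sqnorm (S.mulVec w) := by
    rw [sqnorm_eq_dot]
    have := hne'
    rw [dotProduct_sub] at this
    linarith
  -- embedding bounds
  have hSw := (hSE w hwK).1
  have hSb := (hSE b hbK).2
  have hSwb := (hSE (w - b) hwbK).1
  have hSsub : S.mulVec (w - b) = S.mulVec w - S.mulVec b := Matrix.mulVec_sub S w b
  have hexp : sqnorm (S.mulVec (w - b)) = sqnorm (S.mulVec b) - sqnorm (S.mulVec w) := by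
    rw [hSsub, sqnorm_sub, hdot]; ring
  have hpyth : sqnorm (w - b) = sqnorm w + sqnorm b := by
    rw [sqnorm_sub]
    have : w ⬝ᵥ b = 0 := by rwa [dotProduct_comm] at horth
    rw [this]; ring
  have hkey : 2 * (1 - δ) * sqnorm w ≤ 2 * δ * sqnorm b := by
    rw [hpyth, hexp] at hSwb
    nlinarith
  have hw2 : sqnorm w ≤ δ / (1 - δ) * sqnorm b := by
    rw [div_mul_eq_mul_div, le_div_iff₀ h1δ]
    nlinarith
  constructor
  · have : a₀ - M.mulVec us = -w := by rw [hw]; abel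
    rw [this]
    have hneg : sqnorm (-w) = sqnorm w := by
      unfold sqnorm; exact Finset.sum_congr rfl fun i _ => by simp [Pi.neg_apply]
    rw [hneg]
    exact hw2
  · have : a - M.mulVec us = b - w := by rw [hb, hw]; abel
    rw [this, sqnorm_sub]
    have hbw : b ⬝ᵥ w = 0 := horth
    rw [hbw]
    have hinv : (1 - δ)⁻¹ = 1 + δ / (1 - δ) := by field_simp; ring
    rw [hinv]
    have := sqnorm_nonneg b
    nlinarith
end
end

section
/- Let β ∈ [0,1], let A and B be real symmetric positive semidefinite n×n matrices, and let θ, θ̄ ≥ 0. Then Φ_β(θA + θ̄B) ≽ θ·Φ_β(A) + θ̄·Φ_β(B) in the Loewner order. In particular (taking θ ∈ [0,1], θ̄ = 1−θ) Φ_β is concave on PSD matrices with respect to the Loewner order, and (taking θ = θ̄ = 1) Φ_β is monotone: if A ≼ C with A, C PSD then Φ_β(A) ≼ Φ_β(C). -/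
noncomputable section

/-- The map `Φ_β(M) = M - β M² / tr(M)`.  (With Lean's convention `(0:ℝ)⁻¹ = 0`, this
definition automatically satisfies the convention `Φ_β(0) = 0`, since a PSD matrix with
zero trace is zero.) -/
def Phi (β : ℝ) {n : ℕ} (M : Matrix (Fin n) (Fin n) ℝ) : Matrix (Fin n) (Fin n) ℝ :=
  M - (β * (Matrix.trace M)⁻¹) • (M * M)

open Matrix

variable {n : ℕ}

lemma psd_smul {c : ℝ} (hc : 0 ≤ c) {M : Matrix (Fin n) (Fin n) ℝ} (hM : M.PosSemidef) :
    (c • M).PosSemidef := by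
  refine ⟨?_, fun x => ?_⟩
  · unfold Matrix.IsHermitian
    rw [conjTranspose_smul, hM.1.eq]; simp
  · exact (hM.smul hc).2 x

lemma trace_eq_sum_eig {M : Matrix (Fin n) (Fin n) ℝ} (hM : M.IsHermitian) :
    M.trace = ∑ i, hM.eigenvalues i := by
  conv_lhs => rw [hM.spectral_theorem]
  rw [Unitary.conjStarAlgAut_apply, trace_mul_cycle, mem_unitaryGroup_iff'.mp hM.eigenvectorUnitary.2, one_mul,
    trace_diagonal]
  simp

lemma psd_trace_nonneg {M : Matrix (Fin n) (Fin n) ℝ} (hM : M.PosSemidef) : 0 ≤ M.trace := by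
  rw [trace_eq_sum_eig hM.1]
  exact Finset.sum_nonneg fun i _ => hM.eigenvalues_nonneg i

lemma psd_eq_zero_of_trace_zero {M : Matrix (Fin n) (Fin n) ℝ} (hM : M.PosSemidef)
    (h : M.trace = 0) : M = 0 := by
  rw [trace_eq_sum_eig hM.1] at h
  have heig : ∀ i ∈ Finset.univ, hM.1.eigenvalues i = 0 :=
    (Finset.sum_eq_zero_iff_of_nonneg fun i _ => hM.eigenvalues_nonneg i).mp h
  have : Matrix.diagonal (RCLike.ofReal ∘ hM.1.eigenvalues) = (0 : Matrix (Fin n) (Fin n) ℝ) := by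
    ext i j
    rcases eq_or_ne i j with rfl | hij
    · simp [heig i (Finset.mem_univ i)]
    · simp [Matrix.diagonal_apply_ne _ hij]
  conv_lhs => rw [hM.1.spectral_theorem]
  rw [Unitary.conjStarAlgAut_apply, this, mul_zero, zero_mul]

lemma psd_trace_pos {M : Matrix (Fin n) (Fin n) ℝ} (hM : M.PosSemidef) (h0 : M ≠ 0) :
    0 < M.trace :=
  (psd_trace_nonneg hM).lt_of_ne fun h => h0 (psd_eq_zero_of_trace_zero hM h.symm)

lemma trace_smul_one_sub_psd {M : Matrix (Fin n) (Fin n) ℝ} (hM : M.PosSemidef) :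
    (M.trace • (1 : Matrix (Fin n) (Fin n) ℝ) - M).PosSemidef := by
  set U : Matrix (Fin n) (Fin n) ℝ := (hM.1.eigenvectorUnitary : Matrix (Fin n) (Fin n) ℝ) with hUdef
  have hU : U * star U = 1 := mem_unitaryGroup_iff.mp hM.1.eigenvectorUnitary.2
  have hdiag : Matrix.diagonal (fun i => M.trace - hM.1.eigenvalues i)
      = M.trace • (1 : Matrix (Fin n) (Fin n) ℝ)
        - Matrix.diagonal (RCLike.ofReal ∘ hM.1.eigenvalues) := by
    ext i j
    rcases eq_or_ne i j with rfl | hij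
    · simp
    · simp [Matrix.diagonal_apply_ne _ hij, Matrix.one_apply_ne hij]
  have key : M.trace • (1 : Matrix (Fin n) (Fin n) ℝ) - M
      = U * Matrix.diagonal (fun i => M.trace - hM.1.eigenvalues i) * star U := by
    rw [hdiag, mul_sub, sub_mul, mul_smul_comm, mul_one, smul_mul_assoc, hU, hUdef,
      ← Unitary.conjStarAlgAut_apply (S := ℝ), ← hM.1.spectral_theorem]
  rw [key, hUdef, Matrix.star_eq_conjTranspose]
  refine Matrix.PosSemidef.mul_mul_conjTranspose_same ?_ _
  refine Matrix.posSemidef_diagonal_iff.mpr fun i => sub_nonneg.mpr ?_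
  rw [trace_eq_sum_eig hM.1]
  exact Finset.single_le_sum (fun j _ => hM.eigenvalues_nonneg j) (Finset.mem_univ i)

lemma Phi_zero (β : ℝ) : Phi β (0 : Matrix (Fin n) (Fin n) ℝ) = 0 := by simp [Phi]

lemma Phi_smul (β c : ℝ) (M : Matrix (Fin n) (Fin n) ℝ) : Phi β (c • M) = c • Phi β M := by
  unfold Phi
  rw [trace_smul, smul_mul_smul_comm, smul_sub, smul_smul, smul_smul]
  congr 2
  rcases eq_or_ne c 0 with rfl | hc
  · simp
  · rw [smul_eq_mul, mul_inv]
    have h : c * c * c⁻¹ = c := mul_inv_cancel_right₀ hc c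
    linear_combination β * M.trace⁻¹ * h

lemma Phi_superadd {β : ℝ} (hβ : 0 ≤ β) {A B : Matrix (Fin n) (Fin n) ℝ}
    (hA : A.PosSemidef) (hB : B.PosSemidef) :
    (Phi β (A + B) - (Phi β A + Phi β B)).PosSemidef := by
  rcases eq_or_ne A 0 with rfl | hA0
  · simpa [Phi_zero] using Matrix.PosSemidef.zero
  rcases eq_or_ne B 0 with rfl | hB0
  · simpa [Phi_zero] using Matrix.PosSemidef.zero
  have ha : 0 < A.trace := psd_trace_pos hA hA0
  have hb : 0 < B.trace := psd_trace_pos hB hB0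
  set C := B.trace • A - A.trace • B with hC
  have hCherm : Cᴴ = C := by
    rw [hC, conjTranspose_sub, conjTranspose_smul, conjTranspose_smul, hA.1.eq, hB.1.eq]
    simp
  have key : Phi β (A + B) - (Phi β A + Phi β B)
      = (β * (A.trace * B.trace * (A.trace + B.trace))⁻¹) • (Cᴴ * C) := by
    rw [hCherm]
    unfold Phi
    rw [trace_add]
    simp only [hC, add_mul, mul_add, sub_mul, mul_sub, smul_mul_assoc, mul_smul_comm]
    match_scalars <;> field_simp <;> ring
  rw [key]
  refine psd_smul (mul_nonneg hβ (inv_nonneg.mpr ?_)) (Matrix.posSemidef_conjTranspose_mul_self C)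
  positivity

lemma Phi_psd {β : ℝ} (hβ : β ∈ Set.Icc (0:ℝ) 1) {M : Matrix (Fin n) (Fin n) ℝ}
    (hM : M.PosSemidef) : (Phi β M).PosSemidef := by
  rcases eq_or_ne M 0 with rfl | h0
  · simpa [Phi_zero] using Matrix.PosSemidef.zero
  have ht : 0 < M.trace := psd_trace_pos hM h0
  obtain ⟨S, hSh, hSS⟩ : ∃ S : Matrix (Fin n) (Fin n) ℝ, Sᴴ = S ∧ S * S = M :=
    by open scoped MatrixOrder in exact ⟨CFC.sqrt M, (CFC.sqrt_nonneg M).posSemidef.1, CFC.sqrt_mul_sqrt_self M hM.nonneg⟩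
  have h1 : M.trace • M - M * M = S * (M.trace • (1 : Matrix (Fin n) (Fin n) ℝ) - M) * Sᴴ := by
    rw [hSh, mul_sub, sub_mul, mul_smul_comm, mul_one, smul_mul_assoc, hSS]
    congr 1
    rw [← hSS]
    simp only [mul_assoc]
  have h2 : (M.trace • M - M * M).PosSemidef :=
    h1 ▸ (trace_smul_one_sub_psd hM).mul_mul_conjTranspose_same S
  have h3 : Phi β M = (1 - β) • M + (β * M.trace⁻¹) • (M.trace • M - M * M) := by
    unfold Phi
    match_scalars <;> field_simp <;> ring
  rw [h3]
  exact (psd_smul (by linarith [hβ.2]) hM).add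
    (psd_smul (mul_nonneg hβ.1 (inv_nonneg.mpr ht.le)) h2)

lemma Phi_mono {β : ℝ} (hβ : β ∈ Set.Icc (0:ℝ) 1) {C D : Matrix (Fin n) (Fin n) ℝ}
    (hC : C.PosSemidef) (hCD : (D - C).PosSemidef) : (Phi β D - Phi β C).PosSemidef := by
  have h := Phi_superadd hβ.1 hC hCD
  rw [add_sub_cancel] at h
  have heq : Phi β D - Phi β C
      = (Phi β D - (Phi β C + Phi β (D - C))) + Phi β (D - C) := by abel
  rw [heq]
  exact h.add (Phi_psd hβ hCD)

/-- Superadditivity of `Φ_β` over nonnegative combinations of PSD matrices: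
`Φ_β(θA + θ̄B) ≽ θ Φ_β(A) + θ̄ Φ_β(B)` in the Loewner order.  In particular `Φ_β`
is concave on PSD matrices (the case `θ + θ̄ = 1`), and (the case `θ = θ̄ = 1`)
`Φ_β` is monotone with respect to the Loewner order, which is stated as the second
conjunct. -/
theorem stmt11 {n : ℕ} (β : ℝ) (hβ : β ∈ Set.Icc (0 : ℝ) 1)
    (A B : Matrix (Fin n) (Fin n) ℝ) (hA : A.PosSemidef) (hB : B.PosSemidef)
    (θ θ' : ℝ) (hθ : 0 ≤ θ) (hθ' : 0 ≤ θ') :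
    (Phi β (θ • A + θ' • B) - (θ • Phi β A + θ' • Phi β B)).PosSemidef ∧
      ∀ C D : Matrix (Fin n) (Fin n) ℝ, C.PosSemidef → D.PosSemidef →
        (D - C).PosSemidef → (Phi β D - Phi β C).PosSemidef := by
  constructor
  · have h := Phi_superadd hβ.1 (psd_smul hθ hA) (psd_smul hθ' hB)
    rwa [Phi_smul, Phi_smul] at h
  · exact fun C D hC _ hCD => Phi_mono hβ hC hCD
end
end

section
/- Let E be a real symmetric positive semidefinite n×n matrix with tr(E) > 0, let β ∈ [0,1], and let p̃ : {1,…,n} → [0,1] be a probability distribution (Σ_i p̃(i) = 1) satisfying p̃(i) ≥ β·E_{ii}/tr(E) for every i. Then E − Σ_{i : E_{ii} > 0} p̃(i) · E_{ii}^{−1} · E_{:,i} E_{:,i}ᵀ ≼ Φ_β(E) = E − β·E²/tr(E) in the Loewner order. (Columns with E_{ii} = 0 are zero since E is PSD, so the corresponding terms are omitted.) -/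
noncomputable section
open Matrix

/-- One step of approximate norm sampling (Nyström deflation of a random column):
if `p̃` is a probability distribution with `p̃(i) ≥ β E_{ii}/tr(E)`, then the expected
one-step residual `E - Σ_i p̃(i) E_{ii}⁻¹ E_{:,i} E_{:,i}ᵀ` is dominated in the Loewner
order by `Φ_β(E)` (columns with `E_{ii} = 0` -- which are zero since `E` is PSD -- are
omitted). -/
theorem stmt12 {n : ℕ} (β : ℝ) (hβ : β ∈ Set.Icc (0 : ℝ) 1)
    (E : Matrix (Fin n) (Fin n) ℝ) (hE : E.PosSemidef) (htr : 0 < Matrix.trace E)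
    (p : Fin n → ℝ) (hp0 : ∀ i, 0 ≤ p i) (hp1 : ∑ i, p i = 1)
    (hplb : ∀ i, β * (E i i / Matrix.trace E) ≤ p i) :
    (Phi β E -
        (E - ∑ i ∈ Finset.univ.filter (fun i : Fin n => 0 < E i i),
          (p i * (E i i)⁻¹) • Matrix.vecMulVec (fun a => E a i) (fun b => E b i))).PosSemidef := by
  classical
  set c : ℝ := β * (Matrix.trace E)⁻¹ with hc
  set s : Finset (Fin n) := Finset.univ.filter (fun i : Fin n => 0 < E i i) with hs
  have hsymm : ∀ a b, E a b = E b a := fun a b => by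
    conv_lhs => rw [← hE.isHermitian]
    simp [Matrix.conjTranspose_apply]
  -- columns with zero diagonal are zero
  have hcol0 : ∀ i : Fin n, i ∉ s → ∀ a, E a i = 0 := by
    intro i hi a
    have h2 : ¬ (0 < E i i) := by simpa [hs] using hi
    have hdiag : star (Pi.single i (1:ℝ)) ⬝ᵥ E *ᵥ (Pi.single i (1:ℝ)) = E i i := by
      simp [dotProduct, Matrix.mulVec, Pi.single_apply, mul_ite, ite_mul,
        Finset.sum_ite_eq', Finset.sum_ite_eq]
    have h1 : 0 ≤ E i i := hdiag ▸ hE.dotProduct_mulVec_nonneg (Pi.single i 1)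
    have hEii : E i i = 0 := le_antisymm (not_lt.mp h2) h1
    have hz := (hE.dotProduct_mulVec_zero_iff (Pi.single i 1)).mp (by rw [hdiag, hEii])
    have := congrFun hz a
    simpa [Matrix.mulVec, dotProduct, Pi.single_apply, mul_ite,
      Finset.sum_ite_eq', Finset.sum_ite_eq, hsymm a i] using this
  set S : Matrix (Fin n) (Fin n) ℝ :=
    ∑ i ∈ s, (p i * (E i i)⁻¹) • Matrix.vecMulVec (fun a => E a i) (fun b => E b i) with hS
  have hD : Phi β E - (E - S) = S - c • (E * E) := by
    ext a b
    simp only [Phi, Matrix.sub_apply, Matrix.smul_apply, smul_eq_mul]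
    ring
  rw [hD]
  refine Matrix.posSemidef_iff_dotProduct_mulVec.mpr ⟨?_, ?_⟩
  · -- Hermitian
    show (S - c • (E * E)).conjTranspose = _
    ext a b
    simp only [Matrix.conjTranspose_apply, Matrix.sub_apply, Matrix.smul_apply, hS,
      Matrix.sum_apply, Matrix.vecMulVec_apply, Matrix.mul_apply, star_trivial, smul_eq_mul]
    congr 1
    · exact Finset.sum_congr rfl fun i _ => by ring
    · congr 1
      exact Finset.sum_congr rfl fun k _ => by rw [hsymm b k, hsymm k a]; ring
  · intro x
    set w : Fin n → ℝ := fun i => ∑ a, E a i * x a with hw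
    have hstar : (star x : Fin n → ℝ) = x := by simp
    have hw0 : ∀ i, i ∉ s → w i = 0 := fun i hi => by simp [hw, hcol0 i hi]
    -- linearity facts
    have hsplit : star x ⬝ᵥ (S - c • (E * E)) *ᵥ x
        = (∑ i ∈ s, (p i * (E i i)⁻¹) * (w i)^2) - c * ∑ i, (w i)^2 := by
      have hterm : ∀ i : Fin n,
          x ⬝ᵥ (Matrix.vecMulVec (fun a => E a i) (fun b => E b i)) *ᵥ x = (w i)^2 := by
        intro i
        have : x ⬝ᵥ (Matrix.vecMulVec (fun a => E a i) (fun b => E b i)) *ᵥ x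
            = ∑ a, ∑ b, (E a i * x a) * (E b i * x b) := by
          simp [dotProduct, Matrix.mulVec, Matrix.vecMulVec_apply, Finset.mul_sum]
          exact Finset.sum_congr rfl fun a _ => Finset.sum_congr rfl fun b _ => by ring
        rw [this, hw, pow_two, Finset.sum_mul_sum]
      have hSx : star x ⬝ᵥ S *ᵥ x = ∑ i ∈ s, (p i * (E i i)⁻¹) * (w i)^2 := by
        rw [hstar, hS]
        have hmv : (∑ i ∈ s, (p i * (E i i)⁻¹) •
            Matrix.vecMulVec (fun a => E a i) (fun b => E b i)) *ᵥ x
            = ∑ i ∈ s, (p i * (E i i)⁻¹) •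
              ((Matrix.vecMulVec (fun a => E a i) (fun b => E b i)) *ᵥ x) := by
          ext a
          simp [Matrix.mulVec, dotProduct, Matrix.sum_apply, Matrix.smul_apply,
            Finset.sum_mul, Finset.sum_apply, Finset.mul_sum]
          rw [Finset.sum_comm]
          exact Finset.sum_congr rfl fun i _ => Finset.sum_congr rfl fun b _ => by ring
        rw [hmv]
        have hds : x ⬝ᵥ (∑ i ∈ s, (p i * (E i i)⁻¹) •
            ((Matrix.vecMulVec (fun a => E a i) (fun b => E b i)) *ᵥ x))
            = ∑ i ∈ s, x ⬝ᵥ ((p i * (E i i)⁻¹) •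
              ((Matrix.vecMulVec (fun a => E a i) (fun b => E b i)) *ᵥ x)) := by
          simp only [dotProduct, Finset.sum_apply, Finset.mul_sum]
          exact Finset.sum_comm
        rw [hds]
        exact Finset.sum_congr rfl fun i _ => by
          rw [dotProduct_smul, smul_eq_mul, hterm i]
      have hE2 : star x ⬝ᵥ (E * E) *ᵥ x = ∑ i, (w i)^2 := by
        rw [hstar, ← Matrix.mulVec_mulVec, Matrix.dotProduct_mulVec]
        refine Finset.sum_congr rfl fun i _ => ?_
        have h1 : Matrix.vecMul x E i = w i := by
          simp [Matrix.vecMul, dotProduct, hw, mul_comm]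
        have h2 : (E *ᵥ x) i = w i := by
          simp only [Matrix.mulVec, dotProduct, hw]
          exact Finset.sum_congr rfl fun a _ => by rw [hsymm i a]
        rw [h1, h2, pow_two]
      rw [Matrix.sub_mulVec, dotProduct_sub, hSx, Matrix.smul_mulVec,
        dotProduct_smul, smul_eq_mul, hE2]
    rw [hsplit]
    have huniv : ∑ i, (w i)^2 = ∑ i ∈ s, (w i)^2 := by
      refine (Finset.sum_subset (Finset.subset_univ s) fun i _ hi => by simp [hw0 i hi]).symm
    rw [huniv, Finset.mul_sum, ← Finset.sum_sub_distrib]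
    refine Finset.sum_nonneg fun i hi => ?_
    have hEpos : 0 < E i i := by simpa [hs] using hi
    have hle : c ≤ p i * (E i i)⁻¹ := by
      have h1 : c * E i i ≤ p i := by
        have : c * E i i = β * (E i i / Matrix.trace E) := by
          rw [hc]; field_simp
        rw [this]; exact hplb i
      calc c = c * E i i * (E i i)⁻¹ := by field_simp
        _ ≤ p i * (E i i)⁻¹ := by
            exact mul_le_mul_of_nonneg_right h1 (inv_nonneg.mpr hEpos.le)
    have : 0 ≤ (p i * (E i i)⁻¹ - c) * (w i)^2 :=
      mul_nonneg (sub_nonneg.mpr hle) (sq_nonneg _)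
    linarith [this]
end
end

section
/- Let β ∈ [0,1], let n ≥ 2 and 1 ≤ r < n with q = n − r, and let k ≥ 0 be an integer. Let K be a real symmetric positive semidefinite n×n matrix with eigenvalues λ_1 ≥ ⋯ ≥ λ_n, and set a = Σ_{i≤r} λ_i and b = Σ_{i>r} λ_i. Let Λ* be the diagonal n×n matrix whose first r diagonal entries equal a/r and whose remaining q diagonal entries equal b/q. Then tr( Φ_β^{(k)}(K) ) ≤ tr( Φ_β^{(k)}(Λ*) ), where Φ_β^{(k)} denotes the k-fold composition of Φ_β. -/
noncomputable section

open Matrix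

/-- vector version of `Phi` acting on the spectrum -/
def psiv (β : ℝ) {n : ℕ} (x : Fin n → ℝ) : Fin n → ℝ :=
  fun i => x i - β * (∑ j, x j)⁻¹ * (x i * x i)

/-- suffix sum from index `j` -/
def Suf {n : ℕ} (x : Fin n → ℝ) (j : ℕ) : ℝ :=
  ∑ i ∈ Finset.univ.filter (fun i : Fin n => j ≤ (i : ℕ)), x i

lemma Suf_zero {n : ℕ} (x : Fin n → ℝ) : Suf x 0 = ∑ i, x i := by
  simp [Suf]

lemma Suf_of_ge {n : ℕ} (x : Fin n → ℝ) {j : ℕ} (h : n ≤ j) : Suf x j = 0 := by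
  rw [Suf]
  apply Finset.sum_eq_zero
  intro i hi
  simp only [Finset.mem_filter] at hi
  exact absurd hi.2 (by have := i.2; omega)

lemma Suf_succ {n : ℕ} (x : Fin n → ℝ) {j : ℕ} (h : j < n) :
    Suf x j = x ⟨j, h⟩ + Suf x (j + 1) := by
  have hset : Finset.univ.filter (fun i : Fin n => j ≤ (i : ℕ)) =
      insert ⟨j, h⟩ (Finset.univ.filter (fun i : Fin n => j + 1 ≤ (i : ℕ))) := by
    ext i
    simp [Fin.ext_iff]
    omega
  rw [Suf, hset, Finset.sum_insert (by simp)]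
  rfl

lemma Suf_nonneg {n : ℕ} {x : Fin n → ℝ} (hx : ∀ i, 0 ≤ x i) (j : ℕ) : 0 ≤ Suf x j :=
  Finset.sum_nonneg fun i _ => hx i

lemma Suf_sub {n : ℕ} (x y : Fin n → ℝ) (j : ℕ) :
    Suf (fun i => x i - y i) j = Suf x j - Suf y j := by
  simp [Suf, Finset.sum_sub_distrib]

lemma Suf_congr {n : ℕ} {x y : Fin n → ℝ} (h : ∀ i, x i = y i) (j : ℕ) :
    Suf x j = Suf y j := by
  simp [Suf]; exact Finset.sum_congr rfl fun i _ => h i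

lemma Suf_mono {n : ℕ} {x y : Fin n → ℝ} (h : ∀ i, x i ≤ y i) (j : ℕ) :
    Suf x j ≤ Suf y j :=
  Finset.sum_le_sum fun i _ => h i

/-- one entry is at most the total sum -/
lemma single_le_total {n : ℕ} {x : Fin n → ℝ} (hx : ∀ i, 0 ≤ x i) (i : Fin n) :
    x i ≤ ∑ j, x j :=
  Finset.single_le_sum (fun j _ => hx j) (Finset.mem_univ i)

/-- two distinct entries sum to at most the total sum -/
lemma pair_le_total {n : ℕ} {x : Fin n → ℝ} (hx : ∀ i, 0 ≤ x i) {i j : Fin n} (hij : i ≠ j) :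
    x i + x j ≤ ∑ l, x l := by
  classical
  have : ∑ l ∈ ({i, j} : Finset (Fin n)), x l ≤ ∑ l, x l :=
    Finset.sum_le_sum_of_subset_of_nonneg (Finset.subset_univ _) (fun l _ _ => hx l)
  rwa [Finset.sum_pair hij] at this

section vec
variable {n : ℕ} {β : ℝ}

lemma sum_eq_zero_forall {x : Fin n → ℝ} (hx : ∀ i, 0 ≤ x i) (hs : ∑ j, x j = 0) :
    ∀ i, x i = 0 := by
  intro i
  have := (Finset.sum_eq_zero_iff_of_nonneg (fun j _ => hx j)).1 hs
  exact this i (Finset.mem_univ i)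

lemma psiv_nonneg (hβ0 : 0 ≤ β) (hβ1 : β ≤ 1) {x : Fin n → ℝ} (hx : ∀ i, 0 ≤ x i) :
    ∀ i, 0 ≤ psiv β x i := by
  intro i
  set s := ∑ j, x j with hs
  rcases eq_or_lt_of_le (Finset.sum_nonneg (fun j _ => hx j) : (0:ℝ) ≤ s) with h0 | h0
  · have := sum_eq_zero_forall hx h0.symm
    simp [psiv, ← hs, this i]
  · have hxi : x i ≤ s := single_le_total hx i
    have h1 : β * x i ≤ s := le_trans (by nlinarith [hx i]) hxi
    have hinv : s * s⁻¹ = 1 := mul_inv_cancel₀ (ne_of_gt h0)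
    simp only [psiv, ← hs]
    nlinarith [hx i, mul_nonneg (mul_nonneg hβ0 (hx i)) (hx i)]

lemma psiv_antitone (hβ0 : 0 ≤ β) (hβ1 : β ≤ 1) {x : Fin n → ℝ}
    (hx : Antitone x) (hx0 : ∀ i, 0 ≤ x i) : Antitone (psiv β x) := by
  intro i j hij
  rcases eq_or_lt_of_le hij with rfl | hlt
  · exact le_refl _
  set s := ∑ l, x l with hs
  rcases eq_or_lt_of_le (Finset.sum_nonneg (fun l _ => hx0 l) : (0:ℝ) ≤ s) with h0 | h0
  · have hz := sum_eq_zero_forall hx0 h0.symm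
    simp [psiv, ← hs, hz i, hz j]
  · have hpair : x i + x j ≤ s := pair_le_total hx0 (ne_of_lt hlt)
    have hxij : x j ≤ x i := hx hij
    have hinv : s * s⁻¹ = 1 := mul_inv_cancel₀ (ne_of_gt h0)
    have hinvn : (0:ℝ) ≤ s⁻¹ := inv_nonneg.2 (le_of_lt h0)
    simp only [psiv, ← hs]
    -- goal : x j - β * s⁻¹ * (x j * x j) ≤ x i - β * s⁻¹ * (x i * x i)
    have h2 : s⁻¹ * (x i + x j) ≤ 1 := by
      nlinarith
    have h3 : β * (s⁻¹ * (x i + x j)) ≤ 1 := by nlinarith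
    nlinarith [mul_nonneg (sub_nonneg.2 hxij) (sub_nonneg.2 h3), mul_nonneg hβ0 hinvn]

end vec

section vec2
variable {n : ℕ} {β : ℝ}

lemma Suf_const_mul (c : ℝ) (f : Fin n → ℝ) (j : ℕ) :
    Suf (fun i => c * f i) j = c * Suf f j := by
  simp [Suf, Finset.mul_sum]

lemma Suf_add {n : ℕ} (x y : Fin n → ℝ) (j : ℕ) :
    Suf (fun i => x i + y i) j = Suf x j + Suf y j := by
  simp [Suf, Finset.sum_add_distrib]

/-- Abel-type summation bound: the weighted suffix sum is at least the first weight
times the plain suffix sum, when weights increase along the index. -/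
lemma abel_bound (x y d : Fin n → ℝ)
    (hd : ∀ i j : Fin n, i ≤ j → d i ≤ d j)
    (hB : ∀ j : ℕ, Suf x j ≤ Suf y j) :
    ∀ m : ℕ, ∀ j : ℕ, (hj : j < n) → n - j = m + 1 →
      d ⟨j, hj⟩ * (Suf y j - Suf x j) ≤ Suf (fun i => (y i - x i) * d i) j := by
  intro m
  induction m with
  | zero =>
    intro j hj hnj
    have hj1 : n ≤ j + 1 := by omega
    rw [Suf_succ _ hj, Suf_succ _ hj, Suf_succ _ hj, Suf_of_ge _ hj1, Suf_of_ge _ hj1,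
      Suf_of_ge _ hj1]
    ring_nf
    exact le_refl _
  | succ m ih =>
    intro j hj hnj
    have hj1 : j + 1 < n := by omega
    have ih' := ih (j + 1) hj1 (by omega)
    have hBj : 0 ≤ Suf y (j+1) - Suf x (j+1) := sub_nonneg.2 (hB (j+1))
    have hdj : d ⟨j, hj⟩ ≤ d ⟨j+1, hj1⟩ := hd _ _ (by simp [Fin.le_def])
    rw [Suf_succ (fun i => (y i - x i) * d i) hj, Suf_succ x hj, Suf_succ y hj]
    have h1 : d ⟨j, hj⟩ * (Suf y (j+1) - Suf x (j+1)) ≤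
        d ⟨j+1, hj1⟩ * (Suf y (j+1) - Suf x (j+1)) :=
      mul_le_mul_of_nonneg_right hdj hBj
    nlinarith [ih']

/-- The main analytic step: suffix-sum domination is preserved by `psiv`. -/
lemma dom_step (hβ0 : 0 ≤ β) (hβ1 : β ≤ 1) (hn : 2 ≤ n) {x y : Fin n → ℝ}
    (hx : Antitone x) (hy : Antitone y) (hx0 : ∀ i, 0 ≤ x i) (hy0 : ∀ i, 0 ≤ y i)
    (hdom : ∀ j, Suf x j ≤ Suf y j) :
    ∀ j, Suf (psiv β x) j ≤ Suf (psiv β y) j := by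
  intro j
  rcases le_or_gt n j with hjn | hjn
  · rw [Suf_of_ge _ hjn, Suf_of_ge _ hjn]
  set s := ∑ l, x l with hs
  set t := ∑ l, y l with ht
  have hs0 : 0 ≤ s := Finset.sum_nonneg fun l _ => hx0 l
  have hst : s ≤ t := by
    have := hdom 0; rwa [Suf_zero, Suf_zero, ← hs, ← ht] at this
  rcases eq_or_lt_of_le (le_trans hs0 hst) with ht0 | ht0
  · -- t = 0 : everything is zero
    have hyz := sum_eq_zero_forall hy0 ht0.symm
    have hsz : s = 0 := le_antisymm (ht0 ▸ hst) hs0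
    have hxz := sum_eq_zero_forall hx0 hsz
    have h1 : ∀ i, psiv β x i = 0 := fun i => by simp [psiv, hxz i]
    have h2 : ∀ i, psiv β y i = 0 := fun i => by simp [psiv, hyz i]
    rw [Suf_congr h1, Suf_congr h2]
  rcases eq_or_lt_of_le hs0 with hs0' | hs0'
  · -- s = 0 : x is zero
    have hxz := sum_eq_zero_forall hx0 hs0'.symm
    have h1 : ∀ i, psiv β x i = 0 := fun i => by simp [psiv, hxz i]
    have h2 : Suf (psiv β x) j = 0 := by
      rw [Suf_congr h1 j]; simp [Suf]
    rw [h2]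
    exact Suf_nonneg (psiv_nonneg hβ0 hβ1 hy0) j
  · -- main case 0 < s ≤ t
    have hsinv : s * s⁻¹ = 1 := mul_inv_cancel₀ (ne_of_gt hs0')
    have htinv : t * t⁻¹ = 1 := mul_inv_cancel₀ (ne_of_gt ht0)
    have hsinv0 : 0 ≤ s⁻¹ := inv_nonneg.2 (le_of_lt hs0')
    have htinv0 : 0 ≤ t⁻¹ := inv_nonneg.2 (le_of_lt ht0)
    have hts : t⁻¹ ≤ s⁻¹ := by
      rw [inv_le_inv₀ ht0 hs0']; exact hst
    set d : Fin n → ℝ := fun i => 1 - β * t⁻¹ * (x i + y i) with hdd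
    have hd : ∀ i j : Fin n, i ≤ j → d i ≤ d j := by
      intro i j hij
      have h1 : x j ≤ x i := hx hij
      have h2 : y j ≤ y i := hy hij
      have := mul_nonneg hβ0 htinv0
      simp only [hdd]
      nlinarith
    -- pointwise decomposition
    have hpt : ∀ i, psiv β y i - psiv β x i
        = (y i - x i) * d i + (β * (s⁻¹ - t⁻¹)) * (x i * x i) := by
      intro i
      simp only [psiv, ← hs, ← ht, hdd]
      ring
    have hdecomp : Suf (psiv β y) j - Suf (psiv β x) j
        = Suf (fun i => (y i - x i) * d i) j
          + (β * (s⁻¹ - t⁻¹)) * Suf (fun i => x i * x i) j := by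
      rw [← Suf_const_mul, ← Suf_add, ← Suf_sub]
      exact Suf_congr hpt j
    have habel := abel_bound x y d hd hdom (n - j - 1) j hjn (by omega)
    have hQ0 : 0 ≤ Suf (fun i => x i * x i) j :=
      Suf_nonneg (fun i => mul_self_nonneg (x i)) j
    set Q := Suf (fun i => x i * x i) j with hQdef
    set TA := Suf (fun i => (y i - x i) * d i) j with hTA
    rcases Nat.eq_zero_or_pos j with rfl | hj1
    · -- full-sum case
      set x0 := x ⟨0, hjn⟩ with hx0def
      set y0 := y ⟨0, hjn⟩ with hy0def
      have hSx : Suf x 0 = s := Suf_zero x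
      have hSy : Suf y 0 = t := Suf_zero y
      have h1 : s - x0 ≤ t - y0 := by
        have hd1 := hdom 1
        have e1 : Suf x 0 = x0 + Suf x 1 := Suf_succ x hjn
        have e2 : Suf y 0 = y0 + Suf y 1 := Suf_succ y hjn
        rw [hSx] at e1; rw [hSy] at e2
        linarith
      have hQ1 : x0 * x0 ≤ Q := by
        rw [hQdef, Suf_zero]
        exact Finset.single_le_sum (fun (i : Fin n) _ => mul_self_nonneg (x i))
          (Finset.mem_univ (⟨0, hjn⟩ : Fin n))
      have hx0s : x0 ≤ s := single_le_total hx0 _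
      have hbreq : t - β * x0 - β * y0 + β * s⁻¹ * Q
          = (1 - β) * t + β * s⁻¹ * (s - x0) ^ 2 + β * ((t - y0) - (s - x0))
            + β * s⁻¹ * (Q - x0 * x0) + (2 * β * x0 - β * s) * (s * s⁻¹ - 1) := by
        ring
      have hbr : 0 ≤ t - β * x0 - β * y0 + β * s⁻¹ * Q := by
        rw [hbreq, hsinv]
        have e1 : 0 ≤ (1 - β) * t := mul_nonneg (by linarith) (le_of_lt ht0)
        have e2 : 0 ≤ β * s⁻¹ * (s - x0) ^ 2 :=
          mul_nonneg (mul_nonneg hβ0 hsinv0) (sq_nonneg _)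
        have e3 : 0 ≤ β * ((t - y0) - (s - x0)) := mul_nonneg hβ0 (by linarith)
        have e4 : 0 ≤ β * s⁻¹ * (Q - x0 * x0) :=
          mul_nonneg (mul_nonneg hβ0 hsinv0) (by linarith)
        linarith
      have heq : d ⟨0, hjn⟩ * (t - s) + β * (s⁻¹ - t⁻¹) * Q
          = t⁻¹ * (t - s) * (t - β * x0 - β * y0 + β * s⁻¹ * Q) := by
        simp only [hdd, ← hx0def, ← hy0def]
        linear_combination (-(t - s + β * s⁻¹ * Q)) * htinv + (β * t⁻¹ * Q) * hsinv
      have hfin : 0 ≤ d ⟨0, hjn⟩ * (t - s) + β * (s⁻¹ - t⁻¹) * Q := by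
        rw [heq]
        exact mul_nonneg (mul_nonneg htinv0 (sub_nonneg.2 hst)) hbr
      rw [hSx, hSy] at habel
      have hpos : 0 ≤ Suf (psiv β y) 0 - Suf (psiv β x) 0 := by
        rw [hdecomp]
        exact le_trans hfin (add_le_add_left habel _)
      linarith
    · -- proper suffix case : the leading weight is nonnegative
      have hne : (⟨0, by omega⟩ : Fin n) ≠ ⟨j, hjn⟩ := by
        simp [Fin.ext_iff]; omega
      have hxj2 : x ⟨j, hjn⟩ + x ⟨j, hjn⟩ ≤ s := by
        have h1 := pair_le_total hx0 hne
        have h2 : x ⟨j, hjn⟩ ≤ x ⟨0, by omega⟩ := hx (by simp [Fin.le_def])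
        linarith
      have hyj2 : y ⟨j, hjn⟩ + y ⟨j, hjn⟩ ≤ t := by
        have h1 := pair_le_total hy0 hne
        have h2 : y ⟨j, hjn⟩ ≤ y ⟨0, by omega⟩ := hy (by simp [Fin.le_def])
        linarith
      have hdj : 0 ≤ d ⟨j, hjn⟩ := by
        simp only [hdd]
        have hxy : x ⟨j, hjn⟩ + y ⟨j, hjn⟩ ≤ t := by linarith
        have hxyn : 0 ≤ x ⟨j, hjn⟩ + y ⟨j, hjn⟩ := by
          have := hx0 ⟨j, hjn⟩; have := hy0 ⟨j, hjn⟩; linarith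
        have h5 : t⁻¹ * (x ⟨j, hjn⟩ + y ⟨j, hjn⟩) ≤ 1 := by
          nlinarith [mul_le_mul_of_nonneg_left hxy htinv0]
        have h6 : β * (t⁻¹ * (x ⟨j, hjn⟩ + y ⟨j, hjn⟩)) ≤ 1 :=
          mul_le_one₀ hβ1 (mul_nonneg htinv0 hxyn) h5
        nlinarith [h6]
      have hB : 0 ≤ Suf y j - Suf x j := sub_nonneg.2 (hdom j)
      have h2 : 0 ≤ β * (s⁻¹ - t⁻¹) * Q :=
        mul_nonneg (mul_nonneg hβ0 (sub_nonneg.2 hts)) hQ0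
      have hpos : 0 ≤ Suf (psiv β y) j - Suf (psiv β x) j := by
        rw [hdecomp]
        nlinarith [mul_nonneg hdj hB]
      linarith


/-- iterate the invariant -/
lemma iter_dom (hβ0 : 0 ≤ β) (hβ1 : β ≤ 1) (hn : 2 ≤ n) {x y : Fin n → ℝ}
    (hx : Antitone x) (hy : Antitone y) (hx0 : ∀ i, 0 ≤ x i) (hy0 : ∀ i, 0 ≤ y i)
    (hdom : ∀ j, Suf x j ≤ Suf y j) (k : ℕ) :
    ∑ i, (psiv β)^[k] x i ≤ ∑ i, (psiv β)^[k] y i := by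
  have main : ∀ k : ℕ, Antitone ((psiv β)^[k] x) ∧ (∀ i, 0 ≤ (psiv β)^[k] x i) ∧
      Antitone ((psiv β)^[k] y) ∧ (∀ i, 0 ≤ (psiv β)^[k] y i) ∧
      (∀ j, Suf ((psiv β)^[k] x) j ≤ Suf ((psiv β)^[k] y) j) := by
    intro k
    induction k with
    | zero => exact ⟨hx, hx0, hy, hy0, hdom⟩
    | succ k ih =>
      obtain ⟨h1, h2, h3, h4, h5⟩ := ih
      simp only [Function.iterate_succ_apply']
      exact ⟨psiv_antitone hβ0 hβ1 h1 h2, psiv_nonneg hβ0 hβ1 h2,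
        psiv_antitone hβ0 hβ1 h3 h4, psiv_nonneg hβ0 hβ1 h4,
        dom_step hβ0 hβ1 hn h1 h3 h2 h4 h5⟩
  have h := (main k).2.2.2.2 0
  rwa [Suf_zero, Suf_zero] at h

end vec2

section matrixreduction
variable {n : ℕ} {β : ℝ}

lemma Phi_diagonal (v : Fin n → ℝ) :
    Phi β (Matrix.diagonal v) = Matrix.diagonal (psiv β v) := by
  rw [Phi, Matrix.diagonal_mul_diagonal, Matrix.trace_diagonal,
    ← Matrix.diagonal_smul, Matrix.diagonal_sub]
  congr 1

lemma Phi_iterate_diagonal (v : Fin n → ℝ) (k : ℕ) :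
    (Phi β)^[k] (Matrix.diagonal v) = Matrix.diagonal ((psiv β)^[k] v) := by
  induction k with
  | zero => rfl
  | succ k ih =>
    rw [Function.iterate_succ_apply', Function.iterate_succ_apply', ih, Phi_diagonal]

lemma Phi_conj {U M : Matrix (Fin n) (Fin n) ℝ} (hU : Uᵀ * U = 1) :
    Phi β (U * M * Uᵀ) = U * Phi β M * Uᵀ := by
  have hU' : U * Uᵀ = 1 := mul_eq_one_comm.1 hU
  have htr : Matrix.trace (U * M * Uᵀ) = Matrix.trace M := by
    rw [Matrix.trace_mul_cycle, hU, Matrix.one_mul]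
  have hsq : (U * M * Uᵀ) * (U * M * Uᵀ) = U * (M * M) * Uᵀ := by
    calc (U * M * Uᵀ) * (U * M * Uᵀ) = U * M * (Uᵀ * U) * M * Uᵀ := by
          simp only [Matrix.mul_assoc]
      _ = U * (M * M) * Uᵀ := by rw [hU]; simp only [Matrix.mul_one, Matrix.mul_assoc]
  rw [Phi, Phi, htr, hsq, Matrix.mul_sub, Matrix.sub_mul, Matrix.mul_smul, Matrix.smul_mul]

lemma Phi_iterate_conj {U : Matrix (Fin n) (Fin n) ℝ} (hU : Uᵀ * U = 1)
    (M : Matrix (Fin n) (Fin n) ℝ) (k : ℕ) :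
    (Phi β)^[k] (U * M * Uᵀ) = U * (Phi β)^[k] M * Uᵀ := by
  induction k with
  | zero => rfl
  | succ k ih =>
    rw [Function.iterate_succ_apply', Function.iterate_succ_apply', ih, Phi_conj hU]

lemma trace_conj {U M : Matrix (Fin n) (Fin n) ℝ} (hU : Uᵀ * U = 1) :
    Matrix.trace (U * M * Uᵀ) = Matrix.trace M := by
  rw [Matrix.trace_mul_cycle, hU, Matrix.one_mul]

end matrixreduction

section init
variable {n : ℕ}

/-- counting elements of `Fin n` whose value satisfies a predicate -/
lemma card_filter_val (p : ℕ → Prop) [DecidablePred p] :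
    (Finset.univ.filter (fun i : Fin n => p (i : ℕ))).card
      = ((Finset.range n).filter p).card := by
  rw [Finset.card_filter, Finset.card_filter,
    ← Fin.sum_univ_eq_sum_range (fun i => if p i then 1 else 0) n]

lemma card_filter_ge (j : ℕ) :
    (Finset.univ.filter (fun i : Fin n => j ≤ (i : ℕ))).card = n - j := by
  rw [card_filter_val]
  have : (Finset.range n).filter (fun i => j ≤ i) = Finset.Ico j n := by
    ext i; simp; omega
  rw [this, Nat.card_Ico]

lemma card_filter_between (j m : ℕ) (hm : m ≤ n) :
    (Finset.univ.filter (fun i : Fin n => j ≤ (i : ℕ) ∧ (i : ℕ) < m)).card = m - j := by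
  rw [card_filter_val (fun i => j ≤ i ∧ i < m)]
  have : (Finset.range n).filter (fun i => j ≤ i ∧ i < m) = Finset.Ico j m := by
    ext i; simp; omega
  rw [this, Nat.card_Ico]

/-- the cross counting lemma: block of larger values versus block of smaller values -/
lemma cross_lemma {A B : Finset (Fin n)} {f : Fin n → ℝ}
    (h : ∀ a ∈ A, ∀ b ∈ B, f b ≤ f a) :
    (A.card : ℝ) * (∑ b ∈ B, f b) ≤ (B.card : ℝ) * (∑ a ∈ A, f a) := by
  have h1 : (A.card : ℝ) * (∑ b ∈ B, f b) = ∑ _a ∈ A, ∑ b ∈ B, f b := by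
    rw [Finset.sum_const, nsmul_eq_mul]
  have h2 : ∀ a ∈ A, (∑ b ∈ B, f b) ≤ (B.card : ℝ) * f a := by
    intro a ha
    calc ∑ b ∈ B, f b ≤ ∑ _b ∈ B, f a := Finset.sum_le_sum (fun b hb => h a ha b hb)
      _ = (B.card : ℝ) * f a := by rw [Finset.sum_const, nsmul_eq_mul]
  calc (A.card : ℝ) * (∑ b ∈ B, f b) = ∑ _a ∈ A, ∑ b ∈ B, f b := h1
    _ ≤ ∑ a ∈ A, (B.card : ℝ) * f a := Finset.sum_le_sum h2
    _ = (B.card : ℝ) * (∑ a ∈ A, f a) := by rw [Finset.mul_sum]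

end init

section init2
variable {n : ℕ}

lemma card_filter_lt (m : ℕ) (hm : m ≤ n) :
    (Finset.univ.filter (fun i : Fin n => (i : ℕ) < m)).card = m := by
  rw [card_filter_val (fun i => i < m)]
  have : (Finset.range n).filter (fun i => i < m) = Finset.Ico 0 m := by
    ext i; simp; omega
  rw [this, Nat.card_Ico, Nat.sub_zero]

lemma init_dom {r : ℕ} (hr1 : 1 ≤ r) (hrn : r < n) (lam : Fin n → ℝ)
    (hanti : Antitone lam) (a b : ℝ)
    (ha : a = ∑ i ∈ Finset.univ.filter (fun i : Fin n => (i : ℕ) < r), lam i)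
    (hb : b = ∑ i ∈ Finset.univ.filter (fun i : Fin n => r ≤ (i : ℕ)), lam i) :
    ∀ j, Suf lam j ≤
      Suf (fun i : Fin n => if (i : ℕ) < r then a / (r : ℝ) else b / ((n - r : ℕ) : ℝ)) j := by
  intro j
  set q : ℕ := n - r with hqdef
  have hq : 0 < q := by omega
  have hr0 : (0 : ℝ) < (r : ℝ) := by exact_mod_cast hr1
  have hq0 : (0 : ℝ) < (q : ℝ) := by exact_mod_cast hq
  set μ : Fin n → ℝ := fun i => if (i : ℕ) < r then a / (r : ℝ) else b / ((q : ℕ) : ℝ)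
    with hμdef
  rcases le_or_gt n j with hnj | hjn
  · rw [Suf_of_ge _ hnj, Suf_of_ge _ hnj]
  -- split `Suf μ j` into the two blocks
  have hμsplit : Suf μ j =
      ((Finset.univ.filter (fun i : Fin n => j ≤ (i : ℕ) ∧ (i : ℕ) < r)).card : ℝ)
        * (a / (r : ℝ))
      + ((Finset.univ.filter (fun i : Fin n => j ≤ (i : ℕ) ∧ ¬ (i : ℕ) < r)).card : ℝ)
        * (b / (q : ℝ)) := by
    rw [Suf, hμdef, Finset.sum_ite (fun _ => a / (r : ℝ)) (fun _ => b / (q : ℝ)),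
      Finset.filter_filter, Finset.filter_filter, Finset.sum_const, Finset.sum_const,
      nsmul_eq_mul, nsmul_eq_mul]
  rcases le_or_gt j r with hjr | hrj
  · -- case j ≤ r
    set B' := Finset.univ.filter (fun i : Fin n => j ≤ (i : ℕ) ∧ (i : ℕ) < r) with hB'
    set A' := Finset.univ.filter (fun i : Fin n => (i : ℕ) < j) with hA'
    have hA'card : A'.card = j := card_filter_lt j (by omega)
    have hB'card : B'.card = r - j := card_filter_between j r (by omega)
    have hsum : (∑ i ∈ A', lam i) + (∑ i ∈ B', lam i) = a := by
      rw [ha, ← Finset.sum_filter_add_sum_filter_not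
        (Finset.univ.filter (fun i : Fin n => (i : ℕ) < r)) (fun i => (i : ℕ) < j) lam,
        Finset.filter_filter, Finset.filter_filter]
      congr 2
      · rw [hA']; ext i; simp; omega
      · rw [hB']; ext i; simp; omega
    have hcross : (A'.card : ℝ) * (∑ i ∈ B', lam i) ≤ (B'.card : ℝ) * (∑ i ∈ A', lam i) := by
      apply cross_lemma
      intro i hi l hl
      rw [hA', Finset.mem_filter] at hi
      rw [hB', Finset.mem_filter] at hl
      exact hanti (by rw [Fin.le_def]; omega)
    rw [hA'card, hB'card] at hcross
    have hcast : ((r - j : ℕ) : ℝ) = (r : ℝ) - (j : ℝ) := by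
      rw [Nat.cast_sub hjr]
    have hkey : (∑ i ∈ B', lam i) ≤ ((r - j : ℕ) : ℝ) * (a / (r : ℝ)) := by
      rw [hcast]
      rw [mul_div_assoc'] at *
      rw [le_div_iff₀ hr0]
      rw [hcast] at hcross
      nlinarith [hcross]
    have hxsplit : Suf lam j = (∑ i ∈ B', lam i) + b := by
      have e2 : Finset.univ.filter (fun i : Fin n => j ≤ (i : ℕ) ∧ ¬ (i : ℕ) < r)
          = Finset.univ.filter (fun i : Fin n => r ≤ (i : ℕ)) := by
        ext i; simp; omega
      rw [Suf, hb, ← Finset.sum_filter_add_sum_filter_not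
        (Finset.univ.filter (fun i : Fin n => j ≤ (i : ℕ))) (fun i => (i : ℕ) < r) lam,
        Finset.filter_filter, Finset.filter_filter, e2]
    have hμval : Suf μ j = ((r - j : ℕ) : ℝ) * (a / (r : ℝ)) + b := by
      rw [hμsplit]
      congr 1
      · rw [hB'card]
      · have hc2 : (Finset.univ.filter (fun i : Fin n => j ≤ (i : ℕ) ∧ ¬ (i : ℕ) < r)).card
            = q := by
          have : (Finset.univ.filter (fun i : Fin n => j ≤ (i : ℕ) ∧ ¬ (i : ℕ) < r))
              = Finset.univ.filter (fun i : Fin n => r ≤ (i : ℕ)) := by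
            ext i; simp; omega
          rw [this, card_filter_ge]
        rw [hc2, mul_div_cancel₀ _ (ne_of_gt hq0)]
    rw [hxsplit, hμval]
    linarith
  · -- case r < j
    set B' := Finset.univ.filter (fun i : Fin n => j ≤ (i : ℕ)) with hB'
    set A' := Finset.univ.filter (fun i : Fin n => r ≤ (i : ℕ) ∧ (i : ℕ) < j) with hA'
    have hA'card : A'.card = j - r := card_filter_between r j (by omega)
    have hB'card : B'.card = n - j := card_filter_ge j
    have hsum : (∑ i ∈ A', lam i) + (∑ i ∈ B', lam i) = b := by
      have e2 : Finset.univ.filter (fun i : Fin n => r ≤ (i : ℕ) ∧ ¬ (i : ℕ) < j)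
          = Finset.univ.filter (fun i : Fin n => j ≤ (i : ℕ)) := by
        ext i; simp; omega
      rw [hb, ← Finset.sum_filter_add_sum_filter_not
        (Finset.univ.filter (fun i : Fin n => r ≤ (i : ℕ))) (fun i => (i : ℕ) < j) lam,
        Finset.filter_filter, Finset.filter_filter, e2]
    have hcross : (A'.card : ℝ) * (∑ i ∈ B', lam i) ≤ (B'.card : ℝ) * (∑ i ∈ A', lam i) := by
      apply cross_lemma
      intro i hi l hl
      rw [hA', Finset.mem_filter] at hi
      rw [hB', Finset.mem_filter] at hl
      exact hanti (by rw [Fin.le_def]; omega)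
    rw [hA'card, hB'card] at hcross
    have hc1 : ((j - r : ℕ) : ℝ) = (j : ℝ) - (r : ℝ) := Nat.cast_sub (by omega)
    have hc2 : ((n - j : ℕ) : ℝ) = (n : ℝ) - (j : ℝ) := Nat.cast_sub (by omega)
    have hc3 : ((q : ℕ) : ℝ) = (n : ℝ) - (r : ℝ) := Nat.cast_sub (by omega)
    have hkey : Suf lam j ≤ ((n - j : ℕ) : ℝ) * (b / (q : ℝ)) := by
      have hSeq : Suf lam j = ∑ i ∈ B', lam i := by rw [Suf, hB']
      rw [hSeq, ← mul_div_assoc, le_div_iff₀ hq0]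
      rw [hc1, hc2] at hcross
      rw [hc2, hc3]
      nlinarith [hcross, hsum]
    have hμval : Suf μ j = ((n - j : ℕ) : ℝ) * (b / (q : ℝ)) := by
      rw [hμsplit]
      have he : (Finset.univ.filter (fun i : Fin n => j ≤ (i : ℕ) ∧ (i : ℕ) < r)) = ∅ := by
        ext i; simp; omega
      have hc4 : (Finset.univ.filter (fun i : Fin n => j ≤ (i : ℕ) ∧ ¬ (i : ℕ) < r)).card
          = n - j := by
        have : (Finset.univ.filter (fun i : Fin n => j ≤ (i : ℕ) ∧ ¬ (i : ℕ) < r))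
            = Finset.univ.filter (fun i : Fin n => j ≤ (i : ℕ)) := by
          ext i; simp; omega
        rw [this, card_filter_ge]
      rw [he, hc4]
      simp
    rw [hμval]
    exact hkey

end init2

section final
variable {n : ℕ}

lemma lam_nonneg_of_psd {K U : Matrix (Fin n) (Fin n) ℝ} {lam : Fin n → ℝ}
    (hK : K.PosSemidef) (hU : Uᵀ * U = 1)
    (hdiag : K = U * Matrix.diagonal lam * Uᵀ) : ∀ i, 0 ≤ lam i := by
  have hD : Uᵀ * K * U = Matrix.diagonal lam := by
    rw [hdiag]
    calc Uᵀ * (U * Matrix.diagonal lam * Uᵀ) * U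
        = (Uᵀ * U) * Matrix.diagonal lam * (Uᵀ * U) := by
          simp only [Matrix.mul_assoc]
      _ = Matrix.diagonal lam := by rw [hU]; simp
  have h := hK.mul_mul_conjTranspose_same Uᵀ
  rw [show (Uᵀ)ᴴ = U from by simp] at h
  rw [hD] at h
  exact Matrix.posSemidef_diagonal_iff.1 h

/-- Schur-concavity step in the analysis of norm sampling: among PSD matrices with top-`r`
eigenvalue sum `a` and remaining eigenvalue sum `b`, the trace of the `k`-fold iterate of
`Φ_β` is maximized by the flat spectrum `Λ* = diag(a/r, …, a/r, b/q, …, b/q)`.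
Here `λ` enumerates the eigenvalues of `K` in nonincreasing order, as witnessed by an
orthogonal diagonalization `K = U diag(λ) Uᵀ`. -/
theorem stmt13 {n : ℕ} (β : ℝ) (hβ : β ∈ Set.Icc (0 : ℝ) 1)
    (hn : 2 ≤ n) (r : ℕ) (hr1 : 1 ≤ r) (hrn : r < n) (k : ℕ)
    (K : Matrix (Fin n) (Fin n) ℝ) (hK : K.PosSemidef)
    (lam : Fin n → ℝ) (hanti : Antitone lam)
    (U : Matrix (Fin n) (Fin n) ℝ) (hU : Uᵀ * U = 1)
    (hdiag : K = U * Matrix.diagonal lam * Uᵀ)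
    (a b : ℝ)
    (ha : a = ∑ i ∈ Finset.univ.filter (fun i : Fin n => i.1 < r), lam i)
    (hb : b = ∑ i ∈ Finset.univ.filter (fun i : Fin n => r ≤ i.1), lam i) :
    Matrix.trace ((Phi β)^[k] K) ≤
      Matrix.trace ((Phi β)^[k]
        (Matrix.diagonal fun i : Fin n =>
          if i.1 < r then a / (r : ℝ) else b / ((n - r : ℕ) : ℝ))) := by
  obtain ⟨hβ0, hβ1⟩ := hβ
  set μ : Fin n → ℝ := fun i : Fin n =>
    if i.1 < r then a / (r : ℝ) else b / ((n - r : ℕ) : ℝ) with hμdef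
  have hq : 0 < n - r := by omega
  have hr0 : (0 : ℝ) < (r : ℝ) := by exact_mod_cast hr1
  have hq0 : (0 : ℝ) < ((n - r : ℕ) : ℝ) := by exact_mod_cast hq
  have hlam0 : ∀ i, 0 ≤ lam i := lam_nonneg_of_psd hK hU hdiag
  have ha0 : 0 ≤ a := ha ▸ Finset.sum_nonneg (fun i _ => hlam0 i)
  have hb0 : 0 ≤ b := hb ▸ Finset.sum_nonneg (fun i _ => hlam0 i)
  -- b / q ≤ a / r
  have hcross : ((Finset.univ.filter (fun i : Fin n => i.1 < r)).card : ℝ)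
      * (∑ i ∈ Finset.univ.filter (fun i : Fin n => r ≤ i.1), lam i)
      ≤ ((Finset.univ.filter (fun i : Fin n => r ≤ i.1)).card : ℝ)
      * (∑ i ∈ Finset.univ.filter (fun i : Fin n => i.1 < r), lam i) := by
    apply cross_lemma
    intro i hi l hl
    rw [Finset.mem_filter] at hi hl
    exact hanti (by rw [Fin.le_def]; omega)
  rw [card_filter_lt r (by omega), card_filter_ge r, ← ha, ← hb] at hcross
  have hba : b / ((n - r : ℕ) : ℝ) ≤ a / (r : ℝ) := by
    rw [div_le_div_iff₀ hq0 hr0]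
    nlinarith [hcross]
  have hμ0 : ∀ i, 0 ≤ μ i := by
    intro i
    rw [hμdef]
    dsimp only
    split_ifs
    · exact div_nonneg ha0 (le_of_lt hr0)
    · exact div_nonneg hb0 (le_of_lt hq0)
  have hμanti : Antitone μ := by
    intro i j hij
    rw [hμdef]
    dsimp only
    have hij' : (i : ℕ) ≤ (j : ℕ) := hij
    split_ifs with h1 h2 h2
    · exact le_refl _
    · omega
    · exact hba
    · exact le_refl _
  have hdom := init_dom hr1 hrn lam hanti a b ha hb
  have hKtr : Matrix.trace ((Phi β)^[k] K) = ∑ i, (psiv β)^[k] lam i := by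
    rw [hdiag, Phi_iterate_conj hU, trace_conj hU, Phi_iterate_diagonal,
      Matrix.trace_diagonal]
  have hRtr : Matrix.trace ((Phi β)^[k] (Matrix.diagonal μ)) = ∑ i, (psiv β)^[k] μ i := by
    rw [Phi_iterate_diagonal, Matrix.trace_diagonal]
  rw [hKtr, hRtr]
  exact iter_dom hβ0 hβ1 hn hanti hμanti hlam0 hμ0 hdom k

end final
end
end

section
/- Let T be an order-d real tensor of shape n_1×⋯×n_d. For each i = 1,…,d let J_i be a set of k_i column indices of the mode-i matricization mat_{i,·}T, let T_i = (mat_{i,·}T)_{:,J_i} ∈ ℝ^{n_i×k_i} be the corresponding submatrix, and set ε_i = min_X ‖mat_{i,·}T − T_i·X‖ (Frobenius norm, minimum over X ∈ ℝ^{k_i×∏_{j≠i} n_j}). Then min_{C} ‖T − tucker(C, T_1,…,T_d)‖ ≤ Σ_{i=1}^d ε_i, where the minimum is over all core tensors C ∈ ℝ^{k_1×⋯×k_d}. -/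
noncomputable section

/-- Frobenius norm of a matrix. -/
def mnorm {α β : Type*} [Fintype α] [Fintype β] (B : Matrix α β ℝ) : ℝ :=
  Real.sqrt (∑ a, ∑ b, B a b ^ 2)

/-- Tucker contraction of the core `C` with the satellite matrices `A l`. -/
def tuckerC {d : ℕ} {n k : Fin d → ℕ} (C : ((l : Fin d) → Fin (k l)) → ℝ)
    (A : (l : Fin d) → Matrix (Fin (n l)) (Fin (k l)) ℝ) : Tensor n :=
  fun i => ∑ j : (l : Fin d) → Fin (k l), C j * ∏ l, A l (i l) (j l)

namespace SatID


variable {d : ℕ} {n : Fin d → ℕ}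

/-- Recombination equivalence for mode `m`. -/
def recomb (n : Fin d → ℕ) (m : Fin d) :
    (Fin (n m) × ((l : {l : Fin d // l ≠ m}) → Fin (n l.1))) ≃ ((l : Fin d) → Fin (n l)) where
  toFun p := fun i => if h : i = m then cast (by rw [h]) p.1 else p.2 ⟨i, h⟩
  invFun j := (j m, fun l => j l.1)
  left_inv p := by
    ext
    · simp
    · rename_i l
      simp only []
      rw [dif_neg l.2]
  right_inv j := by
    funext l
    by_cases h : l = m
    · subst h; simp
    · simp [h]

lemma matricize_apply (S : Tensor n) (m : Fin d) (a b) :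
    matricize S m a b = S (recomb n m (a, b)) := rfl

lemma recomb_fst (m : Fin d) (a : Fin (n m)) (b) : recomb n m (a, b) m = a := by
  simp [recomb]

lemma recomb_snd (m : Fin d) (a : Fin (n m)) (b) (l : Fin d) (h : l ≠ m) :
    recomb n m (a, b) l = b ⟨l, h⟩ := by
  simp [recomb, h]



variable {d : ℕ} {n : Fin d → ℕ}

lemma prod_split (m : Fin d) (f : Fin d → ℝ) :
    ∏ l, f l = f m * ∏ l : {l : Fin d // l ≠ m}, f l.1 := by
  rw [← Finset.prod_subtype (Finset.univ.erase m) (fun x => by simp [Finset.mem_erase]) f]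
  rw [Finset.mul_prod_erase _ _ (Finset.mem_univ m)]

lemma tnorm_eq_mnorm (S : Tensor n) (m : Fin d) : tnorm S = mnorm (matricize S m) := by
  unfold tnorm mnorm
  congr 1
  rw [← Equiv.sum_comp (recomb n m) (fun i => S i ^ 2), Fintype.sum_prod_type]
  exact Finset.sum_congr rfl fun a _ => Finset.sum_congr rfl fun b _ => by
    rw [matricize_apply]

/-- Mode-`m` multiplication by a square matrix. -/
def modeMul (m : Fin d) (Q : Matrix (Fin (n m)) (Fin (n m)) ℝ) (S : Tensor n) : Tensor n :=
  fun i => ∑ a, Q (i m) a * S (Function.update i m a)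

lemma update_recomb (m : Fin d) (a c : Fin (n m)) (b) :
    Function.update (recomb n m (a, b)) m c = recomb n m (c, b) := by
  funext l
  by_cases h : l = m
  · subst h; simp [recomb_fst]
  · rw [Function.update_of_ne h, recomb_snd m a b l h, recomb_snd m c b l h]

lemma matricize_modeMul (m : Fin d) (Q : Matrix (Fin (n m)) (Fin (n m)) ℝ) (S : Tensor n) :
    matricize (modeMul m Q S) m = Q * matricize S m := by
  ext a b
  rw [matricize_apply]
  show ∑ c, Q (recomb n m (a, b) m) c * S (Function.update (recomb n m (a, b)) m c) = _
  rw [recomb_fst]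
  rw [Matrix.mul_apply]
  exact Finset.sum_congr rfl fun c _ => by rw [update_recomb, matricize_apply]

lemma tuckerC_one (T : Tensor n) : tuckerC T (fun _ => (1 : Matrix _ _ ℝ)) = T := by
  funext i
  unfold tuckerC
  rw [Finset.sum_eq_single i]
  · simp [Matrix.one_apply]
  · intro j _ hj
    have : ∃ l, i l ≠ j l := by
      by_contra h
      push_neg at h
      exact hj (funext fun l => (h l).symm)
    obtain ⟨l, hl⟩ := this
    rw [Finset.prod_eq_zero (Finset.mem_univ l) (by simp [Matrix.one_apply, hl]), mul_zero]
  · simp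

lemma tuckerC_comp {p k : Fin d → ℕ} (T : ((l : Fin d) → Fin (p l)) → ℝ)
    (B : (l : Fin d) → Matrix (Fin (k l)) (Fin (p l)) ℝ)
    (A : (l : Fin d) → Matrix (Fin (n l)) (Fin (k l)) ℝ) :
    tuckerC (tuckerC T B) A = tuckerC T (fun l => A l * B l) := by
  funext i
  unfold tuckerC
  simp_rw [Matrix.mul_apply, Finset.prod_univ_sum, Finset.sum_mul, Finset.mul_sum]
  rw [Finset.sum_comm]
  refine Finset.sum_congr rfl fun q _ => ?_
  rw [Fintype.piFinset_univ]
  refine Finset.sum_congr rfl fun j _ => ?_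
  rw [Finset.prod_mul_distrib]
  ring

variable {d : ℕ} {n : Fin d → ℕ}

lemma tuckerC_update_apply {k : Fin d → ℕ} (C : ((l : Fin d) → Fin (k l)) → ℝ)
    (A : (l : Fin d) → Matrix (Fin (n l)) (Fin (k l)) ℝ) (m : Fin d)
    (M : Matrix (Fin (n m)) (Fin (k m)) ℝ) (i : (l : Fin d) → Fin (n l)) :
    tuckerC C (Function.update A m M) i =
      ∑ j, C j * (M (i m) (j m) *
        ∏ l : {l : Fin d // l ≠ m}, A l.1 (i l.1) (j l.1)) := by
  unfold tuckerC
  refine Finset.sum_congr rfl fun j _ => ?_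
  rw [prod_split m, Function.update_self]
  congr 1
  congr 1
  exact Finset.prod_congr rfl fun l _ => by rw [Function.update_of_ne l.2]

lemma tuckerC_update_sub {k : Fin d → ℕ} (C : ((l : Fin d) → Fin (k l)) → ℝ)
    (A : (l : Fin d) → Matrix (Fin (n l)) (Fin (k l)) ℝ) (m : Fin d)
    (M N : Matrix (Fin (n m)) (Fin (k m)) ℝ) :
    tuckerC C (Function.update A m (M - N)) =
      tuckerC C (Function.update A m M) - tuckerC C (Function.update A m N) := by
  funext i
  show _ = tuckerC C (Function.update A m M) i - tuckerC C (Function.update A m N) i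
  simp_rw [tuckerC_update_apply, Matrix.sub_apply, ← Finset.sum_sub_distrib]
  exact Finset.sum_congr rfl fun j _ => by ring

lemma modeMul_tuckerC {k : Fin d → ℕ} (m : Fin d) (Q : Matrix (Fin (n m)) (Fin (n m)) ℝ)
    (T : ((l : Fin d) → Fin (k l)) → ℝ) (A : (l : Fin d) → Matrix (Fin (n l)) (Fin (k l)) ℝ) :
    modeMul m Q (tuckerC T A) = tuckerC T (Function.update A m (Q * A m)) := by
  funext i
  show ∑ a, Q (i m) a * tuckerC T A (Function.update i m a) = _
  rw [tuckerC_update_apply]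
  unfold tuckerC
  have key : ∀ a : Fin (n m), ∀ j : (l : Fin d) → Fin (k l),
      ∏ l, A l (Function.update i m a l) (j l) =
        A m a (j m) * ∏ l : {l : Fin d // l ≠ m}, A l.1 (i l.1) (j l.1) := by
    intro a j
    rw [prod_split m, Function.update_self]
    congr 1
    exact Finset.prod_congr rfl fun l _ => by rw [Function.update_of_ne l.2]
  simp_rw [key, Finset.mul_sum]
  rw [Finset.sum_comm]
  refine Finset.sum_congr rfl fun j _ => ?_
  rw [Matrix.mul_apply, Finset.sum_mul, Finset.mul_sum]
  exact Finset.sum_congr rfl fun a _ => by ring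


lemma norm_sq_eucl {N : ℕ} (u : EuclideanSpace ℝ (Fin N)) : ‖u‖^2 = ∑ a, (u a)^2 := by
  rw [EuclideanSpace.norm_eq, Real.sq_sqrt (Finset.sum_nonneg fun a _ => sq_nonneg _)]
  exact Finset.sum_congr rfl fun a _ => by rw [Real.norm_eq_abs, sq_abs]

lemma piLp_equiv_toEuclideanLin_apply {N K : ℕ} (A : Matrix (Fin N) (Fin K) ℝ)
    (x : EuclideanSpace ℝ (Fin K)) :
    WithLp.equiv 2 _ (Matrix.toEuclideanLin A x) = A.mulVec (WithLp.equiv 2 _ x) := rfl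

lemma proj_exists {N K : ℕ} (A : Matrix (Fin N) (Fin K) ℝ) :
    ∃ (P : Matrix (Fin N) (Fin N) ℝ) (B : Matrix (Fin K) (Fin N) ℝ),
      P = A * B ∧
      (∀ x : Fin N → ℝ, ∑ a, (P.mulVec x a)^2 ≤ ∑ a, x a ^ 2) ∧
      (∀ (y : Fin N → ℝ) (z : Fin K → ℝ),
        ∑ a, (y a - P.mulVec y a)^2 ≤ ∑ a, (y a - A.mulVec z a)^2) := by
  set V := LinearMap.range (Matrix.toEuclideanLin A) with hV
  let pl : EuclideanSpace ℝ (Fin N) →ₗ[ℝ] EuclideanSpace ℝ (Fin N) :=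
    V.subtype ∘ₗ (Submodule.orthogonalProjectionOnto V).toLinearMap
  set P := Matrix.toEuclideanLin.symm pl with hP
  have hPl : Matrix.toEuclideanLin P = pl := Matrix.toEuclideanLin.apply_symm_apply pl
  have hmv : ∀ x : Fin N → ℝ, P.mulVec x =
      WithLp.equiv 2 _ (pl ((WithLp.equiv 2 _).symm x)) := by
    intro x
    rw [← hPl, piLp_equiv_toEuclideanLin_apply, Equiv.apply_symm_apply]
  -- columns of P lie in range of A
  have hcol : ∀ x : EuclideanSpace ℝ (Fin N), pl x ∈ V := fun x => (Submodule.orthogonalProjectionOnto V x).2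
  have hB : ∀ x : EuclideanSpace ℝ (Fin N), ∃ z : EuclideanSpace ℝ (Fin K),
      Matrix.toEuclideanLin A z = pl x := fun x => hcol x
  choose Bf hBf using hB
  let B : Matrix (Fin K) (Fin N) ℝ := Matrix.of fun c b => Bf (EuclideanSpace.single b 1) c
  refine ⟨P, B, ?_, ?_, ?_⟩
  · -- P = A * B
    ext a b
    have h1 : P.mulVec (Pi.single b 1) a = P a b := by
      simp [Matrix.mulVec_single]
    have h2 : (A * B).mulVec (Pi.single b 1) a = (A * B) a b := by
      simp [Matrix.mulVec_single]
    rw [← h1, ← h2]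
    rw [hmv]
    have : (A * B).mulVec (Pi.single b 1) = A.mulVec (B.mulVec (Pi.single b 1)) := by
      rw [Matrix.mulVec_mulVec]
    rw [this]
    have hBcol : B.mulVec (Pi.single b 1) = fun c => B c b := by
      funext c; simp [Matrix.mulVec_single]
    rw [hBcol]
    have : A.mulVec (fun c => B c b) =
        WithLp.equiv 2 _ (Matrix.toEuclideanLin A ((WithLp.equiv 2 _).symm fun c => B c b)) := by
      rw [piLp_equiv_toEuclideanLin_apply, Equiv.apply_symm_apply]
    rw [this]
    have hBb : ((WithLp.equiv 2 (Fin K → ℝ)).symm fun c => B c b) = Bf (EuclideanSpace.single b 1) := by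
      rfl
    rw [hBb, hBf]
    have he : ((WithLp.equiv 2 (Fin N → ℝ)).symm (Pi.single b 1)) = EuclideanSpace.single b 1 := rfl
    rw [he]
  · -- contraction
    intro x
    set v : EuclideanSpace ℝ (Fin N) := (WithLp.equiv 2 _).symm x
    have h1 : ∑ a, (P.mulVec x a)^2 = ‖pl v‖^2 := by
      rw [norm_sq_eucl]
      refine Finset.sum_congr rfl fun a _ => ?_
      rw [hmv]
      rfl
    have h2 : ∑ a, x a ^ 2 = ‖v‖^2 := by
      rw [norm_sq_eucl]; rfl
    rw [h1, h2]
    have : ‖pl v‖ ≤ ‖v‖ := by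
      show ‖(Submodule.orthogonalProjectionOnto V v : EuclideanSpace ℝ (Fin N))‖ ≤ ‖v‖
      rw [Submodule.norm_coe]
      calc ‖Submodule.orthogonalProjectionOnto V v‖ ≤ ‖Submodule.orthogonalProjectionOnto V‖ * ‖v‖ :=
            (Submodule.orthogonalProjectionOnto V).le_opNorm v
        _ ≤ 1 * ‖v‖ := by
            gcongr; exact Submodule.orthogonalProjectionOnto_norm_le V
        _ = ‖v‖ := one_mul _
    exact pow_le_pow_left₀ (norm_nonneg _) this 2
  · -- minimality
    intro y z
    set v : EuclideanSpace ℝ (Fin N) := (WithLp.equiv 2 _).symm y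
    set w : EuclideanSpace ℝ (Fin N) := Matrix.toEuclideanLin A ((WithLp.equiv 2 _).symm z)
    have hw : w ∈ V := LinearMap.mem_range_self _ _
    have h1 : ∑ a, (y a - P.mulVec y a)^2 = ‖v - pl v‖^2 := by
      rw [norm_sq_eucl]
      refine Finset.sum_congr rfl fun a _ => ?_
      rw [hmv]; rfl
    have h2 : ∑ a, (y a - A.mulVec z a)^2 = ‖v - w‖^2 := by
      rw [norm_sq_eucl]
      refine Finset.sum_congr rfl fun a _ => ?_
      have hA := piLp_equiv_toEuclideanLin_apply A ((WithLp.equiv 2 _).symm z)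
      rw [Equiv.apply_symm_apply] at hA
      have hAa : A.mulVec z a = w a := (congrFun hA a).symm
      rw [hAa]; rfl
    rw [h1, h2]
    have hle : ‖v - pl v‖ ≤ ‖v - w‖ := by
      have := Submodule.starProjection_minimal (U := V) v
      have h3 : ‖v - (Submodule.orthogonalProjectionOnto V v : EuclideanSpace ℝ (Fin N))‖ = ⨅ x : V, ‖v - x‖ := this
      show ‖v - (Submodule.orthogonalProjectionOnto V v : EuclideanSpace ℝ (Fin N))‖ ≤ _
      rw [h3]
      exact ciInf_le ⟨0, Set.forall_mem_range.2 fun _ => norm_nonneg _⟩ (⟨w, hw⟩ : V)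
    exact pow_le_pow_left₀ (norm_nonneg _) hle 2


variable {d : ℕ} {n : Fin d → ℕ}

lemma tnorm_eq_norm (X : Tensor n) :
    tnorm X = ‖(WithLp.linearEquiv 2 ℝ (((j : Fin d) → Fin (n j)) → ℝ)).symm X‖ := by
  rw [tnorm, EuclideanSpace.norm_eq]
  congr 1
  exact Finset.sum_congr rfl fun i _ => by rw [Real.norm_eq_abs, sq_abs]; rfl

lemma tnorm_nonneg (X : Tensor n) : 0 ≤ tnorm X := Real.sqrt_nonneg _

lemma mnorm_nonneg {α β : Type*} [Fintype α] [Fintype β] (B : Matrix α β ℝ) : 0 ≤ mnorm B :=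
  Real.sqrt_nonneg _

lemma tnorm_sum_le {ι : Type*} (s : Finset ι) (g : ι → Tensor n) :
    tnorm (∑ t ∈ s, g t) ≤ ∑ t ∈ s, tnorm (g t) := by
  simp_rw [tnorm_eq_norm, map_sum]
  exact norm_sum_le _ _

lemma mnorm_col_le {α β : Type*} [Fintype α] [Fintype β] (M M' : Matrix α β ℝ)
    (h : ∀ b, ∑ a, (M a b)^2 ≤ ∑ a, (M' a b)^2) : mnorm M ≤ mnorm M' := by
  unfold mnorm
  apply Real.sqrt_le_sqrt
  rw [Finset.sum_comm, Finset.sum_comm (f := fun a b => M' a b ^ 2)]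
  exact Finset.sum_le_sum fun b _ => h b

lemma tnorm_modeMul_le (m : Fin d) (Q : Matrix (Fin (n m)) (Fin (n m)) ℝ)
    (hQ : ∀ x : Fin (n m) → ℝ, ∑ a, (Q.mulVec x a)^2 ≤ ∑ a, x a ^ 2)
    (S : Tensor n) : tnorm (modeMul m Q S) ≤ tnorm S := by
  rw [tnorm_eq_mnorm _ m, tnorm_eq_mnorm S m, matricize_modeMul]
  apply mnorm_col_le
  intro b
  have : ∀ a, (Q * matricize S m) a b = Q.mulVec (fun c => matricize S m c b) a := by
    intro a; simp [Matrix.mul_apply, Matrix.mulVec, dotProduct]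
  simp_rw [this]
  exact hQ _

end SatID

open SatID

/-- SatID error bound: if `T_i = (mat_{i,·}T)_{:,J_i}` are submatrices of the mode-`i`
matricizations with matrix interpolative errors
`ε_i = min_X ‖mat_{i,·}T - T_i X‖`, then
`min_C ‖T - tucker(C, T_1, …, T_d)‖ ≤ Σ_i ε_i`. -/

theorem stmt15 {d : ℕ} {n : Fin d → ℕ} (T : Tensor n) (k : Fin d → ℕ)
    (J : (i : Fin d) → Fin (k i) → ((l : {l : Fin d // l ≠ i}) → Fin (n l.1)))
    (eps : Fin d → ℝ)
    (heps : ∀ i, eps i =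
      sInf {t : ℝ | ∃ X : Matrix (Fin (k i)) ((l : {l : Fin d // l ≠ i}) → Fin (n l.1)) ℝ,
        t = mnorm (matricize T i - (matricize T i).submatrix id (J i) * X)}) :
    sInf {t : ℝ | ∃ C : ((l : Fin d) → Fin (k l)) → ℝ,
        t = tnorm (T - tuckerC C fun i => (matricize T i).submatrix id (J i))}
      ≤ ∑ i, eps i := by
  set Sub : (i : Fin d) → Matrix (Fin (n i)) (Fin (k i)) ℝ :=
    fun i => (matricize T i).submatrix id (J i) with hSub
  have hpe := fun i => proj_exists (Sub i)
  choose P B hPAB hContr hMin using hpe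
  have mulcol : ∀ {N K : ℕ} {β : Type} [Fintype β] (Q : Matrix (Fin N) (Fin K) ℝ)
      (M : Matrix (Fin K) β ℝ) (a : Fin N) (b : β),
      (Q * M) a b = Q.mulVec (fun c => M c b) a := by
    intro N K β _ Q M a b
    simp [Matrix.mul_apply, Matrix.mulVec, dotProduct]
  -- eps equals the projection error
  have heq : ∀ i, eps i = mnorm (matricize T i - P i * matricize T i) := by
    intro i
    rw [heps i]
    apply le_antisymm
    · have hb : BddBelow {t : ℝ | ∃ X : Matrix (Fin (k i)) ((l : {l : Fin d // l ≠ i}) → Fin (n l.1)) ℝ,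
          t = mnorm (matricize T i - (matricize T i).submatrix id (J i) * X)} :=
        ⟨0, fun t ht => by obtain ⟨X, rfl⟩ := ht; exact mnorm_nonneg _⟩
      have hm : mnorm (matricize T i - P i * matricize T i) ∈
          {t : ℝ | ∃ X : Matrix (Fin (k i)) ((l : {l : Fin d // l ≠ i}) → Fin (n l.1)) ℝ,
            t = mnorm (matricize T i - (matricize T i).submatrix id (J i) * X)} := by
        refine ⟨B i * matricize T i, ?_⟩
        show _ = mnorm (matricize T i - Sub i * (B i * matricize T i))
        rw [hPAB i, Matrix.mul_assoc]
      exact csInf_le hb hm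
    · have hne0 : {t : ℝ | ∃ X : Matrix (Fin (k i)) ((l : {l : Fin d // l ≠ i}) → Fin (n l.1)) ℝ,
          t = mnorm (matricize T i - (matricize T i).submatrix id (J i) * X)}.Nonempty :=
        ⟨_, 0, rfl⟩
      apply le_csInf hne0
      rintro t ⟨X, rfl⟩
      apply mnorm_col_le
      intro b
      have h1 : ∀ a, (matricize T i - P i * matricize T i) a b
          = (fun c => matricize T i c b) a - (P i).mulVec (fun c => matricize T i c b) a := by
        intro a; rw [Matrix.sub_apply, mulcol]
      have h2 : ∀ a, (matricize T i - Sub i * X) a b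
          = (fun c => matricize T i c b) a - (Sub i).mulVec (fun c => X c b) a := by
        intro a; rw [Matrix.sub_apply, mulcol]
      calc _ = ∑ a, ((fun c => matricize T i c b) a
              - (P i).mulVec (fun c => matricize T i c b) a) ^ 2 :=
            Finset.sum_congr rfl fun a _ => congrArg (· ^ 2) (h1 a)
        _ ≤ _ := hMin i (fun c => matricize T i c b) (fun c => X c b)
        _ = _ := Finset.sum_congr rfl fun a _ => congrArg (· ^ 2) (h2 a).symm
  -- telescoping families
  set fam : ℕ → (l : Fin d) → Matrix (Fin (n l)) (Fin (n l)) ℝ :=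
    fun t l => if (l : ℕ) < t then P l else 1 with hfam
  set f : ℕ → Tensor n := fun t => tuckerC T (fam t) with hf
  have h0 : f 0 = T := by
    have e : fam 0 = fun _ => 1 := funext fun l => if_neg (Nat.not_lt_zero _)
    show tuckerC T (fam 0) = T
    rw [e]; exact tuckerC_one T
  have hfd : fam d = fun l => P l := funext fun l => if_pos l.isLt
  -- the candidate core
  have hmem : tnorm (T - f d) ∈ {t : ℝ | ∃ C : ((l : Fin d) → Fin (k l)) → ℝ,
      t = tnorm (T - tuckerC C Sub)} := by
    have hPSB : (fun l => P l) = fun l => Sub l * B l := funext fun l => hPAB l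
    have hfd2 : f d = tuckerC (tuckerC T B) Sub := by
      show tuckerC T (fam d) = _
      rw [tuckerC_comp, hfd, hPSB]
    exact ⟨tuckerC T B, by rw [hfd2]⟩
  have hinf : sInf {t : ℝ | ∃ C : ((l : Fin d) → Fin (k l)) → ℝ,
      t = tnorm (T - tuckerC C Sub)} ≤ tnorm (T - f d) :=
    csInf_le ⟨0, fun t ht => by obtain ⟨C, rfl⟩ := ht; exact tnorm_nonneg _⟩ hmem
  refine le_trans hinf ?_
  -- per-term bound
  have hterm : ∀ i : Fin d, tnorm (f ↑i - f (↑i + 1)) ≤ eps i := by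
    intro i
    have hfi : fam ↑i i = 1 := by
      show (if (i : ℕ) < ↑i then P i else 1) = 1
      exact if_neg (lt_irrefl _)
    have hup : fam (↑i + 1) = Function.update (fam ↑i) i (P i) := by
      funext l
      by_cases hl : l = i
      · subst hl
        rw [Function.update_self]
        exact if_pos (Nat.lt_succ_self _)
      · rw [Function.update_of_ne hl]
        show (if (l : ℕ) < ↑i + 1 then P l else 1) = (if (l : ℕ) < ↑i then P l else 1)
        have hv : (l : ℕ) ≠ ↑i := fun h => hl (Fin.ext h)
        by_cases h : (l : ℕ) < ↑i
        · rw [if_pos (Nat.lt_succ_of_lt h), if_pos h]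
        · rw [if_neg (fun hc => h ((Nat.lt_succ_iff_lt_or_eq.1 hc).resolve_right hv)), if_neg h]
    have hsub : f ↑i - f (↑i + 1) = tuckerC T (Function.update (fam ↑i) i (1 - P i)) := by
      rw [tuckerC_update_sub]
      have e1 : Function.update (fam ↑i) i (1 : Matrix (Fin (n i)) (Fin (n i)) ℝ) = fam ↑i := by
        conv_lhs => rw [← hfi]
        exact Function.update_eq_self i (fam ↑i)
      rw [e1, ← hup]
    rw [hsub]
    set Bf : ℕ → (l : Fin d) → Matrix (Fin (n l)) (Fin (n l)) ℝ :=
      fun s => Function.update (fam s) i (1 - P i) with hBf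
    have hBfi : Function.update (fam ↑i) i (1 - P i) = Bf ↑i := rfl
    rw [hBfi]
    have hB0 : tuckerC T (Bf 0) = modeMul i (1 - P i) T := by
      have h1 : Bf 0 = Function.update (fun l => (1 : Matrix (Fin (n l)) (Fin (n l)) ℝ)) i
          ((1 - P i) * (fun l => (1 : Matrix (Fin (n l)) (Fin (n l)) ℝ)) i) := by
        show Function.update (fam 0) i (1 - P i) = _
        rw [Matrix.mul_one]
        have e0 : fam 0 = fun l => (1 : Matrix (Fin (n l)) (Fin (n l)) ℝ) :=
          funext fun l => if_neg (Nat.not_lt_zero _)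
        rw [e0]
      rw [h1, ← modeMul_tuckerC, tuckerC_one]
    have hB0norm : tnorm (tuckerC T (Bf 0)) = eps i := by
      rw [hB0, tnorm_eq_mnorm _ i, matricize_modeMul, Matrix.sub_mul, Matrix.one_mul, ← heq i]
    have key : ∀ s, s ≤ ↑i → tnorm (tuckerC T (Bf s)) ≤ tnorm (tuckerC T (Bf 0)) := by
      intro s
      induction s with
      | zero => intro _; exact le_refl _
      | succ s ih =>
        intro hs
        have hsi : s < ↑i := Nat.lt_of_succ_le hs
        have hsd : s < d := lt_trans hsi i.isLt
        set s' : Fin d := ⟨s, hsd⟩ with hs'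
        have hne : s' ≠ i := fun h => absurd (congrArg Fin.val h) (Nat.ne_of_lt hsi)
        have hBs : Bf s s' = 1 := by
          show Function.update (fam s) i (1 - P i) s' = 1
          rw [Function.update_of_ne hne]
          show (if (s' : ℕ) < s then P s' else 1) = 1
          exact if_neg (lt_irrefl _)
        have hstep : Bf (s + 1) = Function.update (Bf s) s' (P s' * Bf s s') := by
          funext l
          by_cases hl : l = s'
          · subst hl
            rw [Function.update_self, hBs, Matrix.mul_one]
            show Function.update (fam (s + 1)) i (1 - P i) s' = P s'
            rw [Function.update_of_ne hne]
            show (if (s' : ℕ) < s + 1 then P s' else 1) = P s'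
            exact if_pos (Nat.lt_succ_self s)
          · rw [Function.update_of_ne hl]
            show Function.update (fam (s + 1)) i (1 - P i) l
              = Function.update (fam s) i (1 - P i) l
            by_cases hli : l = i
            · subst hli
              rw [Function.update_self, Function.update_self]
            · rw [Function.update_of_ne hli, Function.update_of_ne hli]
              show (if (l : ℕ) < s + 1 then P l else 1) = (if (l : ℕ) < s then P l else 1)
              have hv : (l : ℕ) ≠ s := fun h => hl (Fin.ext h)
              by_cases h : (l : ℕ) < s
              · rw [if_pos (Nat.lt_succ_of_lt h), if_pos h]
              · rw [if_neg (fun hc => h ((Nat.lt_succ_iff_lt_or_eq.1 hc).resolve_right hv)),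
                  if_neg h]
        calc tnorm (tuckerC T (Bf (s + 1)))
            = tnorm (modeMul s' (P s') (tuckerC T (Bf s))) := by
              rw [modeMul_tuckerC, ← hstep]
          _ ≤ tnorm (tuckerC T (Bf s)) := tnorm_modeMul_le s' (P s') (hContr s') _
          _ ≤ tnorm (tuckerC T (Bf 0)) := ih (le_of_lt hsi)
    calc tnorm (tuckerC T (Bf ↑i)) ≤ tnorm (tuckerC T (Bf 0)) := key ↑i le_rfl
      _ = eps i := hB0norm
  calc tnorm (T - f d) = tnorm (∑ t ∈ Finset.range d, (f t - f (t + 1))) := by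
        rw [Finset.sum_range_sub' f, h0]
    _ ≤ ∑ t ∈ Finset.range d, tnorm (f t - f (t + 1)) := tnorm_sum_le _ _
    _ ≤ ∑ i : Fin d, eps i := by
        rw [← Fin.sum_univ_eq_sum_range (fun t => tnorm (f t - f (t + 1))) d]
        exact Finset.sum_le_sum fun i _ => hterm i
end
end

section
/- Let T be an order-d real tensor of shape n_1×⋯×n_d and let B_i ∈ ℝ^{n_i×k_i} for i = 1,…,d be arbitrary matrices. Let P_i ∈ ℝ^{n_i×n_i} be the orthogonal projection matrix onto the column space of B_i. Then the minimum of ‖T − tucker(C, B_1,…,B_d)‖ over all core tensors C ∈ ℝ^{k_1×⋯×k_d} is attained and equals ‖T − tucker(T, P_1,…,P_d)‖, where tucker(T, P_1,…,P_d) denotes the tensor obtained from T by multiplying mode i by P_i for each i. -/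
noncomputable section

open Matrix

namespace Stmt16Aux

variable {d : ℕ}

def dot {n : Fin d → ℕ} (X Y : Tensor n) : ℝ := ∑ i, X i * Y i

lemma tnorm_eq_dot {n : Fin d → ℕ} (X : Tensor n) : tnorm X = Real.sqrt (dot X X) := by
  simp [tnorm, dot, sq]

lemma dot_self_nonneg {n : Fin d → ℕ} (X : Tensor n) : 0 ≤ dot X X :=
  Finset.sum_nonneg fun i _ => mul_self_nonneg _

lemma tucker_comp {n m k : Fin d → ℕ} (C : ((l : Fin d) → Fin (k l)) → ℝ)
    (A : (l : Fin d) → Matrix (Fin (m l)) (Fin (k l)) ℝ)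
    (A' : (l : Fin d) → Matrix (Fin (n l)) (Fin (m l)) ℝ) :
    tuckerC (tuckerC C A) A' = tuckerC C (fun l => A' l * A l) := by
  funext i
  simp only [tuckerC, Matrix.mul_apply, Finset.sum_mul]
  rw [Finset.sum_comm]
  refine Finset.sum_congr rfl fun j _ => ?_
  have : (∏ l, ∑ a, A' l (i l) a * A l a (j l))
      = ∑ b ∈ Fintype.piFinset (fun l => (Finset.univ : Finset (Fin (m l)))),
          ∏ l, A' l (i l) (b l) * A l (b l) (j l) := Finset.prod_univ_sum _ _
  rw [Fintype.piFinset_univ] at this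
  rw [show (∏ l, ∑ a, A' l (i l) a * A l a (j l)) = _ from this, Finset.mul_sum]
  refine Finset.sum_congr rfl fun b _ => ?_
  rw [Finset.prod_mul_distrib]
  ring

lemma tucker_sub {n k : Fin d → ℕ} (C C' : ((l : Fin d) → Fin (k l)) → ℝ)
    (A : (l : Fin d) → Matrix (Fin (n l)) (Fin (k l)) ℝ) :
    tuckerC (C - C') A = tuckerC C A - tuckerC C' A := by
  funext i
  simp [tuckerC, sub_mul, Finset.sum_sub_distrib]

lemma dot_tucker_left {n k : Fin d → ℕ}
    (A : (l : Fin d) → Matrix (Fin (n l)) (Fin (k l)) ℝ)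
    (X : ((l : Fin d) → Fin (k l)) → ℝ) (Y : Tensor n) :
    dot (tuckerC X A) Y = dot X (tuckerC Y (fun l => (A l)ᵀ)) := by
  simp only [dot, tuckerC, Finset.sum_mul, Matrix.transpose_apply]
  rw [Finset.sum_comm]
  refine Finset.sum_congr rfl fun j _ => ?_
  rw [Finset.mul_sum]
  refine Finset.sum_congr rfl fun i _ => ?_
  ring

lemma matrix_mul_eq_of_mulVec {p q : ℕ} {M : Matrix (Fin p) (Fin q) ℝ}
    {N : Matrix (Fin p) (Fin q) ℝ}
    (h : ∀ v, M.mulVec v = N.mulVec v) : M = N := by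
  ext i j
  have := congrFun (h (Pi.single j 1)) i
  simpa [Matrix.mulVec_single] using this

lemma proj_fix {p q : ℕ} (Pm : Matrix (Fin p) (Fin p) ℝ) (Bm : Matrix (Fin p) (Fin q) ℝ)
    (hidem : Pm * Pm = Pm)
    (hrange : LinearMap.range Pm.mulVecLin = LinearMap.range Bm.mulVecLin) :
    Pm * Bm = Bm := by
  apply matrix_mul_eq_of_mulVec
  intro v
  have hv : Bm.mulVec v ∈ LinearMap.range Pm.mulVecLin := by
    rw [hrange]; exact ⟨v, rfl⟩
  obtain ⟨w, hw⟩ := hv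
  simp only [Matrix.mulVecLin_apply] at hw
  rw [← Matrix.mulVec_mulVec, ← hw, Matrix.mulVec_mulVec, hidem, hw]

lemma proj_factor {p q : ℕ} (Pm : Matrix (Fin p) (Fin p) ℝ) (Bm : Matrix (Fin p) (Fin q) ℝ)
    (hrange : LinearMap.range Pm.mulVecLin = LinearMap.range Bm.mulVecLin) :
    ∃ M : Matrix (Fin q) (Fin p) ℝ, Bm * M = Pm := by
  have h : ∀ j : Fin p, ∃ w : Fin q → ℝ, Bm.mulVec w = Pm.mulVec (Pi.single j 1) := by
    intro j
    have : Pm.mulVec (Pi.single j 1) ∈ LinearMap.range Bm.mulVecLin := by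
      rw [← hrange]; exact ⟨Pi.single j 1, rfl⟩
    obtain ⟨w, hw⟩ := this
    exact ⟨w, hw⟩
  choose w hw using h
  refine ⟨Matrix.of fun a j => w j a, ?_⟩
  ext i j
  have := congrFun (hw j) i
  simp only [Matrix.mulVec, dotProduct] at this
  simp only [Matrix.mul_apply, Matrix.of_apply]
  rw [this]
  simp [Matrix.mulVec, dotProduct, Pi.single_apply, mul_ite, Finset.sum_ite_eq']

end Stmt16Aux

open Stmt16Aux

/-- The optimal Tucker core for given satellite matrices `B l`: the minimum of
`‖T - tucker(C, B_1, …, B_d)‖` over all cores `C` is attained, and equals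
`‖T - tucker(T, P_1, …, P_d)‖` where `P l` is the orthogonal projection matrix onto the
column space of `B l` and `tucker(T, P_1, …, P_d)` multiplies mode `l` of `T` by `P l`. -/
theorem stmt16 {d : ℕ} {n k : Fin d → ℕ} (T : Tensor n)
    (B : (l : Fin d) → Matrix (Fin (n l)) (Fin (k l)) ℝ)
    (P : (l : Fin d) → Matrix (Fin (n l)) (Fin (n l)) ℝ)
    (hsym : ∀ l, (P l)ᵀ = P l)
    (hidem : ∀ l, P l * P l = P l)
    (hrange : ∀ l, LinearMap.range (P l).mulVecLin = LinearMap.range (B l).mulVecLin) :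
    IsLeast {t : ℝ | ∃ C : ((l : Fin d) → Fin (k l)) → ℝ, t = tnorm (T - tuckerC C B)}
      (tnorm (T - tuckerC T P)) := by
  constructor
  · -- membership: take C = tuckerC T M where B l * M l = P l
    choose M hM using fun l => proj_factor (P l) (B l) (hrange l)
    refine ⟨tuckerC T M, ?_⟩
    rw [tucker_comp]
    have hBM : (fun l => B l * M l) = P := funext fun l => hM l
    rw [hBM]
  · -- lower bound
    rintro t ⟨C, rfl⟩
    set X := tuckerC C B with hX
    set E := T - tuckerC T P with hE
    set D := tuckerC T P - X with hD
    have hQX : tuckerC X P = X := by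
      rw [hX, tucker_comp]
      have hPB : (fun l => P l * B l) = B :=
        funext fun l => proj_fix (P l) (B l) (hidem l) (hrange l)
      rw [hPB]
    have hQE : tuckerC E P = 0 := by
      rw [hE, show (T - tuckerC T P : Tensor n) = T - tuckerC T P from rfl]
      rw [tucker_sub T (tuckerC T P) P, tucker_comp]
      have : (fun l => P l * P l) = P := funext fun l => hidem l
      rw [this, sub_self]
    have hD_eq : D = tuckerC (T - X) P := by
      rw [tucker_sub, hD, hQX]
    have horth : dot E D = 0 := by
      rw [hD_eq]
      have h1 : dot (tuckerC (T - X) P) E = dot (T - X) (tuckerC E (fun l => (P l)ᵀ)) :=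
        dot_tucker_left P (T - X) E
      have hPT : (fun l => (P l)ᵀ) = P := funext fun l => hsym l
      rw [hPT, hQE] at h1
      have hcomm : dot E (tuckerC (T - X) P) = dot (tuckerC (T - X) P) E := by
        simp [dot, mul_comm]
      rw [hcomm, h1]
      simp [dot]
    have hTX : T - X = E + D := by
      rw [hE, hD]; abel
    have hexpand : dot (T - X) (T - X) = dot E E + dot D D := by
      rw [hTX]
      have : ∀ i, (E i + D i) * (E i + D i)
          = E i * E i + 2 * (E i * D i) + D i * D i := fun i => by ring
      simp only [dot, Pi.add_apply] at *
      calc ∑ i, (E i + D i) * (E i + D i)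
          = ∑ i, (E i * E i + 2 * (E i * D i) + D i * D i) :=
            Finset.sum_congr rfl fun i _ => this i
        _ = (∑ i, E i * E i) + 2 * (∑ i, E i * D i) + ∑ i, D i * D i := by
            rw [Finset.sum_add_distrib, Finset.sum_add_distrib, Finset.mul_sum]
        _ = (∑ i, E i * E i) + ∑ i, D i * D i := by rw [horth]; ring
    rw [tnorm_eq_dot, tnorm_eq_dot]
    apply Real.sqrt_le_sqrt
    rw [hexpand]
    have := dot_self_nonneg D
    linarith
end
end
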